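/- arXiv:1912.13013 — 5 statements merged into one kernel-verified Lean document; each statement's English description precedes it below -/
import Mathlib

section
/- Let Ω be a properly convex domain, x, y ∈ ∂Ω with [x,y] ⊂ ∂Ω, and let a ∈ F_Ω(x), b ∈ F_Ω(y). Then [a,b] ⊂ ∂Ω. -/
open Set Filter Classical

abbrev Ed (d : ℕ) := EuclideanSpace ℝ (Fin d)

/-- A properly convex domain in an affine chart: a bounded open convex nonempty set. -/
def IsProperlyConvex {d : ℕ} (Ω : Set (Ed d)) : Prop :=
  IsOpen Ω ∧ Convex ℝ Ω ∧ Bornology.IsBounded Ω ∧ Ω.Nonempty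

/-- The face of `x`: `x` together with all points `q` such that some segment inside the
closure of `Ω` contains both `x` and `q` in its interior. -/
def face {d : ℕ} (Ω : Set (Ed d)) (x : Ed d) : Set (Ed d) :=
  insert x {q | ∃ u v : Ed d, segment ℝ u v ⊆ closure Ω ∧
    x ∈ openSegment ℝ u v ∧ q ∈ openSegment ℝ u v}

/-- The Hilbert metric on a bounded open convex set, defined via the cross-ratio of
`x`, `y` and the two intersection points of the line through `x, y` with the boundary. -/
noncomputable def hilbertDist {d : ℕ} (Ω : Set (Ed d)) (x y : Ed d) : ℝ :=
  if x = y then 0 else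
    let a := x + (sSup {t : ℝ | x + t • (x - y) ∈ Ω}) • (x - y)
    let b := y + (sSup {t : ℝ | y + t • (y - x) ∈ Ω}) • (y - x)
    Real.log ((‖b - x‖ * ‖y - a‖) / (‖b - y‖ * ‖x - a‖))

/-!
Separate the midpoint `m` of `[x,y]` from the open convex set `Ω` by a linear functional `f`,
so `f < f m` on `Ω` and `f ≤ f m` on its closure. A linear functional that is maximal at an
interior point of a segment is constant on it: hence `f = f m` on `[x,y]`, then on the faces of
`x` and `y`, and finally on `[a,b]`, which therefore misses `Ω` while lying in its closure.
-/

theorem LinearMap.eq_of_le_of_mem_openSegment {E : Type*} [AddCommGroup E] [Module ℝ E]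
    (f : E →ₗ[ℝ] ℝ) {u v z : E} (hu : f u ≤ f z) (hv : f v ≤ f z)
    (hz : z ∈ openSegment ℝ u v) : f u = f z ∧ f v = f z := by
  obtain ⟨s, t, hs, ht, hst, rfl⟩ := hz
  simp only [map_add, map_smul, smul_eq_mul] at hu hv ⊢
  obtain rfl : s = 1 - t := by linarith
  have huv : f u = f v := le_antisymm (by nlinarith) (by nlinarith)
  rw [← huv]
  constructor <;> ring

theorem face_subset_closure {d : ℕ} {Ω : Set (Ed d)} {x : Ed d} (hx : x ∈ closure Ω) :
    face Ω x ⊆ closure Ω := by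
  rintro q (rfl | ⟨u, v, huv, -, hq⟩)
  exacts [hx, huv (openSegment_subset_segment _ _ _ hq)]

theorem LinearMap.eq_of_mem_face {d : ℕ} {Ω : Set (Ed d)} {x q : Ed d} (f : Ed d →ₗ[ℝ] ℝ)
    (hf : ∀ z ∈ closure Ω, f z ≤ f x) (hq : q ∈ face Ω x) : f q = f x := by
  rcases hq with rfl | ⟨u, v, huv, hx, hq⟩
  · rfl
  obtain ⟨hu, hv⟩ := f.eq_of_le_of_mem_openSegment
    (hf u (huv (left_mem_segment _ _ _))) (hf v (huv (right_mem_segment _ _ _))) hx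
  exact (convex_hyperplane f.isLinear (f x)).segment_subset hu hv
    (openSegment_subset_segment _ _ _ hq)

theorem segment_faces_subset_frontier_general {d : ℕ} (Ω : Set (Ed d)) (hΩ : IsProperlyConvex Ω)
    (x y : Ed d)
    (hxy : segment ℝ x y ⊆ frontier Ω)
    (a b : Ed d) (ha : a ∈ face Ω x) (hb : b ∈ face Ω y) :
    segment ℝ a b ⊆ frontier Ω := by
  obtain ⟨hopen, hconv, -⟩ := hΩ
  rw [hopen.frontier_eq] at hxy ⊢
  have hx := (hxy (left_mem_segment ℝ x y)).1
  have hy := (hxy (right_mem_segment ℝ x y)).1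
  set m := midpoint ℝ x y
  obtain ⟨f, hf⟩ := geometric_hahn_banach_open_point hconv hopen (hxy (midpoint_mem_segment x y)).2
  have hf_closure : ∀ z ∈ closure Ω, f z ≤ f m := fun z hz =>
    closure_minimal (fun w hw => (hf w hw).le) (isClosed_le f.continuous continuous_const) hz
  obtain ⟨hfx, hfy⟩ := (f : Ed d →ₗ[ℝ] ℝ).eq_of_le_of_mem_openSegment
    (hf_closure x hx) (hf_closure y hy) (midpoint_mem_openSegment x y)
  have hfa : f a = f m := hfx ▸ (f : Ed d →ₗ[ℝ] ℝ).eq_of_mem_face (hfx ▸ hf_closure) ha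
  have hfb : f b = f m := hfy ▸ (f : Ed d →ₗ[ℝ] ℝ).eq_of_mem_face (hfy ▸ hf_closure) hb
  intro z hz
  refine ⟨hconv.closure.segment_subset (face_subset_closure hx ha)
    (face_subset_closure hy hb) hz, fun hzΩ => (hf z hzΩ).ne ?_⟩
  exact (convex_hyperplane f.isLinear (f m)).segment_subset hfa hfb hz

/-- If `[x,y] ⊆ ∂Ω`, `a ∈ F_Ω(x)` and `b ∈ F_Ω(y)`, then `[a,b] ⊆ ∂Ω`. -/
theorem segment_faces_subset_frontier {d : ℕ} (Ω : Set (Ed d)) (hΩ : IsProperlyConvex Ω)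
    (x y : Ed d) (hx : x ∈ frontier Ω) (hy : y ∈ frontier Ω)
    (hxy : segment ℝ x y ⊆ frontier Ω)
    (a b : Ed d) (ha : a ∈ face Ω x) (hb : b ∈ face Ω y) :
    segment ℝ a b ⊆ frontier Ω :=
  segment_faces_subset_frontier_general Ω hΩ x y hxy a b ha hb
end

section
/- Let Ω be a bounded open convex domain with Hilbert metric d_Ω. If x₁, x₂, y₁, y₂ ∈ Ω, then the Hausdorff distance (for d_Ω) between the segments [x₁,y₁] and [x₂,y₂] is at most d_Ω(x₁,x₂) + d_Ω(y₁,y₂). -/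
open Set Filter Classical

/-!
`exp d_Ω(x, y)` is the largest value of `F x * G y / (F y * G x)` over affine functions `F`, `G`
that are positive on `Ω`. Indeed such `F`, `G` are nonnegative at the two endpoints of the chord
through `x` and `y`, which bounds the ratio by the cross-ratio, and supporting functionals at
those endpoints attain it. For `p = a x₁ + b y₁` and `q = a x₂ + b y₂`, expanding `F p * G q` and
`F q * G p` bilinearly and comparing the four pairs of terms bounds the ratio for `(p, q)` by
`exp d_Ω(x₁, x₂) * exp d_Ω(y₁, y₂)`. So the point of `[x₂, y₂]` with the barycentric coordinates
of `p` is within `d_Ω(x₁, x₂) + d_Ω(y₁, y₂)` of `p`, and vice versa.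
-/

open Real

section ExitTime

variable {E : Type*} [NormedAddCommGroup E] [NormedSpace ℝ E] {Ω : Set E} {z w : E}

/-- In `hilbertDist Ω x y` the chord endpoints are `x + exitTime Ω x (x - y) • (x - y)` and
`y + exitTime Ω y (y - x) • (y - x)`. -/
noncomputable def exitTime (Ω : Set E) (z w : E) : ℝ :=
  sSup {t : ℝ | z + t • w ∈ Ω}

lemma bddAbove_setOf_add_smul_mem (hΩ : Bornology.IsBounded Ω) (z : E) (hw : w ≠ 0) :
    BddAbove {t : ℝ | z + t • w ∈ Ω} := by
  have hline : ∀ t : ℝ, AffineMap.lineMap z (z + w) t = z + t • w := fun t => by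
    rw [AffineMap.lineMap_apply, vsub_eq_sub, add_sub_cancel_left, vadd_eq_add, add_comm]
  have hne : z ≠ z + w := (add_ne_left.mpr hw).symm
  have h := ((antilipschitzWith_lineMap (𝕜 := ℝ) hne).isBounded_preimage hΩ).bddAbove
  simpa only [Set.preimage, hline] using h

lemma exitTime_nonneg (hb : BddAbove {t : ℝ | z + t • w ∈ Ω}) (hz : z ∈ Ω) :
    0 ≤ exitTime Ω z w :=
  le_csSup hb (by simpa using hz)

lemma add_exitTime_smul_mem_closure (hb : BddAbove {t : ℝ | z + t • w ∈ Ω}) (hz : z ∈ Ω) :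
    z + exitTime Ω z w • w ∈ closure Ω :=
  map_mem_closure (f := fun t : ℝ => z + t • w) (by fun_prop)
    (csSup_mem_closure ⟨0, by simpa using hz⟩ hb) fun _ ht => ht

lemma add_exitTime_smul_notMem (hΩ : IsOpen Ω) (hb : BddAbove {t : ℝ | z + t • w ∈ Ω}) :
    z + exitTime Ω z w • w ∉ Ω := fun h => by
  have hopen : IsOpen {t : ℝ | z + t • w ∈ Ω} := hΩ.preimage (by fun_prop)
  obtain ⟨t, hlt, ht⟩ := Filter.Eventually.exists_gt (hopen.mem_nhds h)
  exact (le_csSup hb ht).not_gt hlt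

lemma exitTime_pos (hΩ : IsOpen Ω) (hb : BddAbove {t : ℝ | z + t • w ∈ Ω}) (hz : z ∈ Ω) :
    0 < exitTime Ω z w :=
  (exitTime_nonneg hb hz).lt_of_ne fun h =>
    add_exitTime_smul_notMem hΩ hb (by rwa [← h, zero_smul, add_zero])

end ExitTime

lemma AffineMap.apply_add_smul_sub {E : Type*} [AddCommGroup E] [Module ℝ E] (F : E →ᵃ[ℝ] ℝ)
    (x y : E) (t : ℝ) : F (y + t • (y - x)) = F y + t * (F y - F x) := by
  rw [add_comm, ← vadd_eq_add, F.map_vadd, map_smul, ← vsub_eq_sub, F.linearMap_vsub,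
    vadd_eq_add, smul_eq_mul, vsub_eq_sub, add_comm]

lemma Convex.exists_affineMap_eq_zero_and_pos {E : Type*} [NormedAddCommGroup E]
    [NormedSpace ℝ E] {Ω : Set E} (hconv : Convex ℝ Ω) (hopen : IsOpen Ω) {p : E} (hp : p ∉ Ω) :
    ∃ F : E →ᵃ[ℝ] ℝ, F p = 0 ∧ ∀ z ∈ Ω, 0 < F z := by
  obtain ⟨f, hf⟩ := geometric_hahn_banach_open_point hconv hopen hp
  refine ⟨AffineMap.const ℝ E (f p) - f.toLinearMap.toAffineMap, by simp, fun z hz => ?_⟩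
  simpa using hf z hz

section Hilbert

variable {d : ℕ} {Ω : Set (Ed d)} {x y : Ed d}

lemma exp_hilbertDist (hopen : IsOpen Ω) (hbdd : Bornology.IsBounded Ω) (hx : x ∈ Ω) (hy : y ∈ Ω)
    (hxy : x ≠ y) :
    exp (hilbertDist Ω x y) =
      (1 + exitTime Ω y (y - x)) * (1 + exitTime Ω x (x - y)) /
        (exitTime Ω y (y - x) * exitTime Ω x (x - y)) := by
  have hr := exitTime_pos hopen (bddAbove_setOf_add_smul_mem hbdd y (sub_ne_zero.mpr hxy.symm)) hy
  have hs := exitTime_pos hopen (bddAbove_setOf_add_smul_mem hbdd x (sub_ne_zero.mpr hxy)) hx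
  simp only [hilbertDist, if_neg hxy, ← exitTime.eq_1]
  set r := exitTime Ω y (y - x)
  set s := exitTime Ω x (x - y)
  have hv : 0 < ‖y - x‖ := norm_pos_iff.mpr (sub_ne_zero.mpr hxy.symm)
  rw [show y + r • (y - x) - x = (1 + r) • (y - x) by module,
    show y - (x + s • (x - y)) = (1 + s) • (y - x) by module,
    show y + r • (y - x) - y = r • (y - x) by module,
    show x - (x + s • (x - y)) = s • (y - x) by module]
  simp only [norm_smul, Real.norm_of_nonneg hr.le, Real.norm_of_nonneg hs.le,
    Real.norm_of_nonneg (by linarith : (0 : ℝ) ≤ 1 + r),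
    Real.norm_of_nonneg (by linarith : (0 : ℝ) ≤ 1 + s)]
  rw [exp_log (by positivity)]
  field_simp

lemma mul_le_exp_hilbertDist_mul (hopen : IsOpen Ω) (hbdd : Bornology.IsBounded Ω) (hx : x ∈ Ω)
    (hy : y ∈ Ω) {F G : Ed d →ᵃ[ℝ] ℝ} (hF : ∀ z ∈ Ω, 0 ≤ F z) (hG : ∀ z ∈ Ω, 0 ≤ G z) :
    F x * G y ≤ exp (hilbertDist Ω x y) * (F y * G x) := by
  rcases eq_or_ne x y with rfl | hxy
  · simp [hilbertDist]
  have hbr := bddAbove_setOf_add_smul_mem hbdd y (sub_ne_zero.mpr hxy.symm)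
  have hbs := bddAbove_setOf_add_smul_mem hbdd x (sub_ne_zero.mpr hxy)
  rw [exp_hilbertDist hopen hbdd hx hy hxy]
  set r := exitTime Ω y (y - x)
  set s := exitTime Ω x (x - y)
  have hr : 0 < r := exitTime_pos hopen hbr hy
  have hs : 0 < s := exitTime_pos hopen hbs hx
  -- `F` and `G` stay nonnegative on the closure, in particular at the two chord endpoints.
  have hFb : 0 ≤ F (y + r • (y - x)) :=
    closure_minimal hF (isClosed_le continuous_const F.continuous_of_finiteDimensional)
      (add_exitTime_smul_mem_closure hbr hy)
  have hGa : 0 ≤ G (x + s • (x - y)) :=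
    closure_minimal hG (isClosed_le continuous_const G.continuous_of_finiteDimensional)
      (add_exitTime_smul_mem_closure hbs hx)
  rw [F.apply_add_smul_sub] at hFb
  rw [G.apply_add_smul_sub] at hGa
  have hFx := hF x hx
  have hFy := hF y hy
  have hGx := hG x hx
  have hGy := hG y hy
  rw [div_mul_eq_mul_div, le_div_iff₀ (by positivity)]
  calc F x * G y * (r * s) = (r * F x) * (s * G y) := by ring
    _ ≤ ((1 + r) * F y) * ((1 + s) * G x) :=
        mul_le_mul (by linarith) (by linarith) (by positivity) (by positivity)
    _ = (1 + r) * (1 + s) * (F y * G x) := by ring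

lemma hilbertDist_nonneg (hopen : IsOpen Ω) (hbdd : Bornology.IsBounded Ω) (hx : x ∈ Ω)
    (hy : y ∈ Ω) : 0 ≤ hilbertDist Ω x y := by
  have h := mul_le_exp_hilbertDist_mul hopen hbdd hx hy (F := AffineMap.const ℝ _ 1)
    (G := AffineMap.const ℝ _ 1) (fun _ _ => zero_le_one) (fun _ _ => zero_le_one)
  simpa using h

lemma exists_affineMap_mul_eq_exp_hilbertDist_mul (hopen : IsOpen Ω) (hconv : Convex ℝ Ω)
    (hbdd : Bornology.IsBounded Ω) (hx : x ∈ Ω) (hy : y ∈ Ω) :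
    ∃ F G : Ed d →ᵃ[ℝ] ℝ, (∀ z ∈ Ω, 0 < F z) ∧ (∀ z ∈ Ω, 0 < G z) ∧
      F x * G y = exp (hilbertDist Ω x y) * (F y * G x) := by
  rcases eq_or_ne x y with rfl | hxy
  · exact ⟨AffineMap.const ℝ _ 1, AffineMap.const ℝ _ 1, by simp, by simp, by simp [hilbertDist]⟩
  have hbr := bddAbove_setOf_add_smul_mem hbdd y (sub_ne_zero.mpr hxy.symm)
  have hbs := bddAbove_setOf_add_smul_mem hbdd x (sub_ne_zero.mpr hxy)
  obtain ⟨F, hFb, hF⟩ :=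
    hconv.exists_affineMap_eq_zero_and_pos hopen (add_exitTime_smul_notMem hopen hbr)
  obtain ⟨G, hGa, hG⟩ :=
    hconv.exists_affineMap_eq_zero_and_pos hopen (add_exitTime_smul_notMem hopen hbs)
  refine ⟨F, G, hF, hG, ?_⟩
  rw [exp_hilbertDist hopen hbdd hx hy hxy]
  set r := exitTime Ω y (y - x)
  set s := exitTime Ω x (x - y)
  have hr : 0 < r := exitTime_pos hopen hbr hy
  have hs : 0 < s := exitTime_pos hopen hbs hx
  rw [F.apply_add_smul_sub] at hFb
  rw [G.apply_add_smul_sub] at hGa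
  rw [div_mul_eq_mul_div, eq_div_iff (by positivity)]
  linear_combination -(s * G y) * hFb - ((1 + r) * F y) * hGa

lemma mul_le_exp_hilbertDist_mul_exp_hilbertDist_mul (hopen : IsOpen Ω)
    (hbdd : Bornology.IsBounded Ω) {x₁ x₂ y₁ y₂ : Ed d} (hx₁ : x₁ ∈ Ω) (hx₂ : x₂ ∈ Ω)
    (hy₁ : y₁ ∈ Ω) (hy₂ : y₂ ∈ Ω) {F G : Ed d →ᵃ[ℝ] ℝ} (hF : ∀ z ∈ Ω, 0 ≤ F z)
    (hG : ∀ z ∈ Ω, 0 ≤ G z) :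
    F x₁ * G y₂ ≤ exp (hilbertDist Ω x₁ x₂) * exp (hilbertDist Ω y₁ y₂) * (F x₂ * G y₁) := by
  have h1 : ∀ z ∈ Ω, (0 : ℝ) ≤ AffineMap.const ℝ (Ed d) 1 z := fun _ _ => zero_le_one
  have hFx := mul_le_exp_hilbertDist_mul hopen hbdd hx₁ hx₂ hF h1
  have hGy := mul_le_exp_hilbertDist_mul hopen hbdd hy₁ hy₂ h1 hG
  simp only [AffineMap.const_apply, mul_one, one_mul] at hFx hGy
  have hFx₂ := hF x₂ hx₂
  calc F x₁ * G y₂ ≤ (exp (hilbertDist Ω x₁ x₂) * F x₂) * (exp (hilbertDist Ω y₁ y₂) * G y₁) :=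
        mul_le_mul hFx hGy (hG y₂ hy₂) (by positivity)
    _ = exp (hilbertDist Ω x₁ x₂) * exp (hilbertDist Ω y₁ y₂) * (F x₂ * G y₁) := by ring

lemma combo_mul_combo_le_exp_mul (hopen : IsOpen Ω) (hbdd : Bornology.IsBounded Ω)
    {x₁ x₂ y₁ y₂ : Ed d} (hx₁ : x₁ ∈ Ω) (hx₂ : x₂ ∈ Ω) (hy₁ : y₁ ∈ Ω) (hy₂ : y₂ ∈ Ω)
    {F G : Ed d →ᵃ[ℝ] ℝ} (hF : ∀ z ∈ Ω, 0 ≤ F z) (hG : ∀ z ∈ Ω, 0 ≤ G z)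
    {a b : ℝ} (ha : 0 ≤ a) (hb : 0 ≤ b) (hab : a + b = 1) :
    F (a • x₁ + b • y₁) * G (a • x₂ + b • y₂) ≤
      exp (hilbertDist Ω x₁ x₂ + hilbertDist Ω y₁ y₂) *
        (F (a • x₂ + b • y₂) * G (a • x₁ + b • y₁)) := by
  have hxy := mul_le_exp_hilbertDist_mul_exp_hilbertDist_mul hopen hbdd hx₁ hx₂ hy₁ hy₂ hF hG
  have hyx := mul_le_exp_hilbertDist_mul_exp_hilbertDist_mul hopen hbdd hy₁ hy₂ hx₁ hx₂ hF hG
  rw [mul_comm (exp _)] at hyx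
  set E₁ := exp (hilbertDist Ω x₁ x₂)
  set E₂ := exp (hilbertDist Ω y₁ y₂)
  have hE₁ : 1 ≤ E₁ := one_le_exp (hilbertDist_nonneg hopen hbdd hx₁ hx₂)
  have hE₂ : 1 ≤ E₂ := one_le_exp (hilbertDist_nonneg hopen hbdd hy₁ hy₂)
  have hFGx := mul_nonneg (hF x₂ hx₂) (hG x₁ hx₁)
  have hFGy := mul_nonneg (hF y₂ hy₂) (hG y₁ hy₁)
  have hxx : F x₁ * G x₂ ≤ E₁ * E₂ * (F x₂ * G x₁) :=
    (mul_le_exp_hilbertDist_mul hopen hbdd hx₁ hx₂ hF hG).trans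
      (by gcongr; exact le_mul_of_one_le_right (by positivity) hE₂)
  have hyy : F y₁ * G y₂ ≤ E₁ * E₂ * (F y₂ * G y₁) :=
    (mul_le_exp_hilbertDist_mul hopen hbdd hy₁ hy₂ hF hG).trans
      (by gcongr; exact le_mul_of_one_le_left (by positivity) hE₁)
  simp only [Convex.combo_affine_apply hab, smul_eq_mul, exp_add]
  calc (a * F x₁ + b * F y₁) * (a * G x₂ + b * G y₂)
      = a ^ 2 * (F x₁ * G x₂) + a * b * (F x₁ * G y₂) + a * b * (F y₁ * G x₂) +
          b ^ 2 * (F y₁ * G y₂) := by ring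
    _ ≤ a ^ 2 * (E₁ * E₂ * (F x₂ * G x₁)) + a * b * (E₁ * E₂ * (F x₂ * G y₁)) +
          a * b * (E₁ * E₂ * (F y₂ * G x₁)) + b ^ 2 * (E₁ * E₂ * (F y₂ * G y₁)) := by
        gcongr
    _ = E₁ * E₂ * ((a * F x₂ + b * F y₂) * (a * G x₁ + b * G y₁)) := by ring

lemma hilbertDist_combo_le (hopen : IsOpen Ω) (hconv : Convex ℝ Ω) (hbdd : Bornology.IsBounded Ω)
    {x₁ x₂ y₁ y₂ : Ed d} (hx₁ : x₁ ∈ Ω) (hx₂ : x₂ ∈ Ω) (hy₁ : y₁ ∈ Ω) (hy₂ : y₂ ∈ Ω)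
    {a b : ℝ} (ha : 0 ≤ a) (hb : 0 ≤ b) (hab : a + b = 1) :
    hilbertDist Ω (a • x₁ + b • y₁) (a • x₂ + b • y₂) ≤
      hilbertDist Ω x₁ x₂ + hilbertDist Ω y₁ y₂ := by
  have hp : a • x₁ + b • y₁ ∈ Ω := hconv hx₁ hy₁ ha hb hab
  have hq : a • x₂ + b • y₂ ∈ Ω := hconv hx₂ hy₂ ha hb hab
  obtain ⟨F, G, hF, hG, hFG⟩ := exists_affineMap_mul_eq_exp_hilbertDist_mul hopen hconv hbdd hp hq
  have key := combo_mul_combo_le_exp_mul hopen hbdd hx₁ hx₂ hy₁ hy₂ (fun z hz => (hF z hz).le)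
    (fun z hz => (hG z hz).le) ha hb hab
  rw [hFG] at key
  exact exp_le_exp.mp (le_of_mul_le_mul_right key (mul_pos (hF _ hq) (hG _ hp)))

end Hilbert

/-- The Hausdorff distance (for the Hilbert metric) between the segments `[x₁,y₁]` and
`[x₂,y₂]` is at most `d_Ω(x₁,x₂) + d_Ω(y₁,y₂)`. -/
theorem hausdorff_dist_segments_le {d : ℕ} (Ω : Set (Ed d)) (hΩ : IsProperlyConvex Ω)
    (x₁ x₂ y₁ y₂ : Ed d) (hx₁ : x₁ ∈ Ω) (hx₂ : x₂ ∈ Ω) (hy₁ : y₁ ∈ Ω) (hy₂ : y₂ ∈ Ω) :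
    (∀ p ∈ segment ℝ x₁ y₁, ∃ q ∈ segment ℝ x₂ y₂,
        hilbertDist Ω p q ≤ hilbertDist Ω x₁ x₂ + hilbertDist Ω y₁ y₂) ∧
    (∀ q ∈ segment ℝ x₂ y₂, ∃ p ∈ segment ℝ x₁ y₁,
        hilbertDist Ω p q ≤ hilbertDist Ω x₁ x₂ + hilbertDist Ω y₁ y₂) := by
  obtain ⟨hopen, hconv, hbdd, -⟩ := hΩ
  constructor
  · rintro p ⟨a, b, ha, hb, hab, rfl⟩
    exact ⟨a • x₂ + b • y₂, ⟨a, b, ha, hb, hab, rfl⟩,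
      hilbertDist_combo_le hopen hconv hbdd hx₁ hx₂ hy₁ hy₂ ha hb hab⟩
  · rintro q ⟨a, b, ha, hb, hab, rfl⟩
    exact ⟨a • x₁ + b • y₁, ⟨a, b, ha, hb, hab, rfl⟩,
      hilbertDist_combo_le hopen hconv hbdd hx₁ hx₂ hy₁ hy₂ ha hb hab⟩
end

section
/- Let Ω be a properly convex domain, g ∈ Aut(Ω) with positive translation length, and suppose A_g = [A⁺, A⁻] is an axis of g (a g-invariant projective line meeting Ω) with lift eigenvalues λ₊ > λ₋ at A⁺ and A⁻. Then λ₊ = λ_max(g̃) and λ₋ = λ_min(g̃); i.e., every axis of g is principal. -/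
open Set Filter

abbrev Vd (d : ℕ) := Fin (d + 1) → ℝ

/-- A properly convex domain `Ω ⊆ P(ℝ^{d+1})`, described by its open convex cone of lifts:
an open convex cone `C` whose closure contains no line through the origin. Points of the
closure of `Ω` are represented by nonzero vectors of the closure of `C`, and two vectors
represent the same point iff they lie on the same ray. -/
def IsProperConvexCone {d : ℕ} (C : Set (Vd d)) : Prop :=
  IsOpen C ∧ Convex ℝ C ∧ C.Nonempty ∧
    (∀ x ∈ C, ∀ t : ℝ, 0 < t → t • x ∈ C) ∧
    (closure C ∩ (-(closure C)) ⊆ {0})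

/-- Lifts of the projective segment `[x,y]` between the points represented by `x` and `y`. -/
def segCone {d : ℕ} (x y : Vd d) : Set (Vd d) :=
  {v | ∃ s t : ℝ, 0 ≤ s ∧ 0 ≤ t ∧ 0 < s + t ∧ v = s • x + t • y}

/-- Lifts of the open projective segment `(x,y)`. -/
def openSegCone {d : ℕ} (x y : Vd d) : Set (Vd d) :=
  {v | ∃ s t : ℝ, 0 < s ∧ 0 < t ∧ v = s • x + t • y}

/-- The Hilbert metric on `Ω`, computed on cone lifts:
`d([x],[y]) = log ( M(x/y) · M(y/x) )` where `M(x/y) = inf { t > 0 | t • y - x ∈ closure C }`.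
This agrees with the cross-ratio definition of the Hilbert metric and is invariant under
rescaling of the lifts. -/
noncomputable def coneDist {d : ℕ} (C : Set (Vd d)) (x y : Vd d) : ℝ :=
  Real.log (sInf {t : ℝ | 0 < t ∧ t • y - x ∈ closure C} *
    sInf {t : ℝ | 0 < t ∧ t • x - y ∈ closure C})

/-- `A ∈ GL(d+1, ℝ)` induces an automorphism of `Ω` iff its linear action preserves the cone. -/
def PreservesCone {d : ℕ} (C : Set (Vd d)) (A : Matrix (Fin (d + 1)) (Fin (d + 1)) ℝ) : Prop :=
  A.mulVec '' C = C

/-- The translation length `τ_Ω(g) = inf_{x ∈ Ω} d_Ω(x, g x)`. -/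
noncomputable def translationLength {d : ℕ} (C : Set (Vd d))
    (A : Matrix (Fin (d + 1)) (Fin (d + 1)) ℝ) : ℝ :=
  sInf ((fun x => coneDist C x (A.mulVec x)) '' C)

/-- `λ_max`: the largest modulus of a (complex) eigenvalue of `A`. -/
noncomputable def specMax {d : ℕ} (A : Matrix (Fin (d + 1)) (Fin (d + 1)) ℝ) : ℝ :=
  sSup ((fun z : ℂ => ‖z‖) '' spectrum ℂ (A.map Complex.ofReal))

/-- `λ_min`: the smallest modulus of a (complex) eigenvalue of `A`. -/
noncomputable def specMin {d : ℕ} (A : Matrix (Fin (d + 1)) (Fin (d + 1)) ℝ) : ℝ :=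
  sInf ((fun z : ℂ => ‖z‖) '' spectrum ℂ (A.map Complex.ofReal))

/-- Three pairwise distinct boundary points `x, y, z` form a half triangle if
`[x,z] ∪ [y,z] ⊆ ∂Ω` and `(x,y) ⊆ Ω`. -/
def IsHalfTriangle {d : ℕ} (C : Set (Vd d)) (x y z : Vd d) : Prop :=
  segCone x z ⊆ frontier C ∧ segCone y z ⊆ frontier C ∧ openSegCone x y ⊆ C

/-- The bi-infinite projective line `(x,y)` is contained in a half triangle in `∂Ω`. -/
def InHalfTriangle {d : ℕ} (C : Set (Vd d)) (x y : Vd d) : Prop :=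
  ∃ z ∈ frontier C, z ≠ 0 ∧ ¬ SameRay ℝ z x ∧ ¬ SameRay ℝ z y ∧ IsHalfTriangle C x y z

/-- `(x,y)` is an axis of the automorphism induced by `A`: an invariant bi-infinite
projective line that intersects `Ω`. -/
def IsAxis {d : ℕ} (C : Set (Vd d)) (A : Matrix (Fin (d + 1)) (Fin (d + 1)) ℝ)
    (x y : Vd d) : Prop :=
  x ∈ frontier C ∧ y ∈ frontier C ∧ x ≠ 0 ∧ y ≠ 0 ∧ ¬ SameRay ℝ x y ∧
    openSegCone x y ⊆ C ∧ A.mulVec '' segCone x y = segCone x y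

/-- A rank-one isometry: positive translation length, existence of an axis, and no axis
contained in a half triangle in `∂Ω`. -/
def IsRankOne {d : ℕ} (C : Set (Vd d)) (A : Matrix (Fin (d + 1)) (Fin (d + 1)) ℝ) : Prop :=
  0 < translationLength C A ∧ (∃ x y, IsAxis C A x y) ∧
    ∀ x y, IsAxis C A x y → ¬ InHalfTriangle C x y


lemma mem_spectrum_of_eigen {m : ℕ} (M : Matrix (Fin m) (Fin m) ℂ) (μ : ℂ)
    (w : Fin m → ℂ) (hw : w ≠ 0) (h : M.mulVec w = μ • w) : μ ∈ spectrum ℂ M := by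
  rw [← AlgEquiv.spectrum_eq (Matrix.toLinAlgEquiv' (R := ℂ) (n := Fin m)),
    ← Module.End.hasEigenvalue_iff_mem_spectrum]
  exact Module.End.hasEigenvalue_of_hasEigenvector
    ⟨Module.End.mem_eigenspace_iff.mpr (by simpa [Matrix.toLin'_apply] using h), hw⟩

lemma eigen_of_mem_spectrum {m : ℕ} (M : Matrix (Fin m) (Fin m) ℂ) (μ : ℂ)
    (h : μ ∈ spectrum ℂ M) : ∃ w : Fin m → ℂ, w ≠ 0 ∧ M.mulVec w = μ • w := by
  rw [← AlgEquiv.spectrum_eq (Matrix.toLinAlgEquiv' (R := ℂ) (n := Fin m)),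
    ← Module.End.hasEigenvalue_iff_mem_spectrum] at h
  obtain ⟨w, hw1, hw0⟩ := h.exists_hasEigenvector
  exact ⟨w, hw0, by simpa [Matrix.toLin'_apply] using Module.End.mem_eigenspace_iff.mp hw1⟩

-- continuity of mulVec
lemma continuous_mulVec {d : ℕ} (A : Matrix (Fin (d + 1)) (Fin (d + 1)) ℝ) :
    Continuous A.mulVec := by
  have : Continuous (Matrix.mulVecLin A) := LinearMap.continuous_of_finiteDimensional _
  simpa [Matrix.coe_mulVecLin] using this

lemma closure_smul_mem {d : ℕ} {C : Set (Vd d)} (hC : IsProperConvexCone C)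
    {t : ℝ} (ht : 0 < t) {y : Vd d} (hy : y ∈ closure C) : t • y ∈ closure C := by
  have hcont : Continuous (fun v : Vd d => t • v) := continuous_const_smul t
  exact map_mem_closure hcont hy (fun z hz => hC.2.2.2.1 z hz t ht)

lemma closure_mulVec_mem {d : ℕ} {C : Set (Vd d)}
    {A : Matrix (Fin (d + 1)) (Fin (d + 1)) ℝ} (hpres : PreservesCone C A)
    {y : Vd d} (hy : y ∈ closure C) : A.mulVec y ∈ closure C := by
  refine map_mem_closure (continuous_mulVec A) hy (fun z hz => ?_)
  rw [← hpres]; exact ⟨z, hz, rfl⟩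

lemma closure_pow_mulVec_mem {d : ℕ} {C : Set (Vd d)}
    {A : Matrix (Fin (d + 1)) (Fin (d + 1)) ℝ} (hpres : PreservesCone C A)
    (n : ℕ) {y : Vd d} (hy : y ∈ closure C) : (A ^ n).mulVec y ∈ closure C := by
  induction n with
  | zero => simpa [Matrix.one_mulVec] using hy
  | succ n ih =>
    have := closure_mulVec_mem hpres ih
    rwa [Matrix.mulVec_mulVec, ← pow_succ'] at this

lemma pow_map_mulVec_eigen {d : ℕ} {A : Matrix (Fin (d + 1)) (Fin (d + 1)) ℝ}
    {μ : ℂ} {w : Fin (d + 1) → ℂ}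
    (hMw : (A.map Complex.ofReal).mulVec w = μ • w) (n : ℕ) :
    ((A ^ n).map Complex.ofReal).mulVec w = (μ ^ n) • w := by
  induction n with
  | zero => simp [Matrix.map_one, Matrix.one_mulVec]
  | succ n ih =>
    have hmm : (A ^ (n + 1)).map Complex.ofReal
        = (A.map Complex.ofReal) * ((A ^ n).map Complex.ofReal) := by
      rw [pow_succ']
      exact Matrix.map_mul (f := Complex.ofRealHom)
    rw [hmm, ← Matrix.mulVec_mulVec, ih, Matrix.mulVec_smul, hMw, smul_smul, ← pow_succ]

lemma map_mulVec_re {d : ℕ} (B : Matrix (Fin (d + 1)) (Fin (d + 1)) ℝ)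
    (w : Fin (d + 1) → ℂ) (j : Fin (d + 1)) :
    ((B.map Complex.ofReal).mulVec w j).re = B.mulVec (fun k => (w k).re) j ∧
    ((B.map Complex.ofReal).mulVec w j).im = B.mulVec (fun k => (w k).im) j := by
  simp [Matrix.mulVec, dotProduct, Complex.re_sum, Complex.im_sum,
    Complex.re_ofReal_mul, Complex.im_ofReal_mul]

lemma key_spec_le {d : ℕ} {C : Set (Vd d)} (hC : IsProperConvexCone C)
    {A : Matrix (Fin (d + 1)) (Fin (d + 1)) ℝ} (hpres : PreservesCone C A)
    {x : Vd d} (hx : x ∈ C) {lp K : ℝ} (hlp : 0 < lp)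
    (hK : ∀ n : ℕ, ‖(A ^ n).mulVec x‖ ≤ K * lp ^ n)
    {μ : ℂ} {w : Fin (d + 1) → ℂ} (hw : w ≠ 0)
    (hMw : (A.map Complex.ofReal).mulVec w = μ • w) :
    ‖μ‖ ≤ lp := by
  by_contra hgt
  push_neg at hgt
  set am := ‖μ‖ with ham
  have ham0 : 0 < am := lt_trans hlp hgt
  -- a nonzero coordinate of w
  obtain ⟨j0, hj0⟩ : ∃ j, w j ≠ 0 := by
    by_contra h; push_neg at h; exact hw (funext h)
  set c : ℝ := ‖w j0‖ with hc
  have hc0 : 0 < c := by simpa [hc] using hj0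
  set u : Vd d := fun k => (w k).re with hu
  set v : Vd d := fun k => (w k).im with hv
  -- growth estimate
  have hgrow : ∀ n : ℕ, am ^ n * c ≤ ‖(A ^ n).mulVec u‖ + ‖(A ^ n).mulVec v‖ := by
    intro n
    have h1 := pow_map_mulVec_eigen hMw n
    have h2 : ((A ^ n).map Complex.ofReal).mulVec w j0 = μ ^ n * w j0 := by
      rw [h1]; simp
    have h3 : ‖((A ^ n).map Complex.ofReal).mulVec w j0‖ = am ^ n * c := by
      rw [h2, norm_mul, norm_pow]
    have h4 := Complex.norm_le_abs_re_add_abs_im (((A ^ n).map Complex.ofReal).mulVec w j0)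
    rw [h3] at h4
    obtain ⟨hre, him⟩ := map_mulVec_re (A ^ n) w j0
    rw [hre, him] at h4
    have h5 : |(A ^ n).mulVec u j0| ≤ ‖(A ^ n).mulVec u‖ := by
      simpa [Real.norm_eq_abs] using norm_le_pi_norm ((A ^ n).mulVec u) j0
    have h6 : |(A ^ n).mulVec v j0| ≤ ‖(A ^ n).mulVec v‖ := by
      simpa [Real.norm_eq_abs] using norm_le_pi_norm ((A ^ n).mulVec v) j0
    calc am ^ n * c ≤ |(A ^ n).mulVec u j0| + |(A ^ n).mulVec v j0| := by
          simpa [hu, hv] using h4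
      _ ≤ _ := add_le_add h5 h6
  -- one of u, v grows frequently
  have hvor : ∀ n : ℕ, am ^ n * (c / 2) ≤ ‖(A ^ n).mulVec u‖ ∨
      am ^ n * (c / 2) ≤ ‖(A ^ n).mulVec v‖ := by
    intro n
    by_contra h; push_neg at h
    have := hgrow n
    nlinarith [h.1, h.2]
  obtain ⟨v0, hfreq⟩ : ∃ v0 : Vd d,
      ∃ᶠ n in atTop, am ^ n * (c / 2) ≤ ‖(A ^ n).mulVec v0‖ := by
    have : (∃ᶠ n in atTop, am ^ n * (c / 2) ≤ ‖(A ^ n).mulVec u‖) ∨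
        (∃ᶠ n in atTop, am ^ n * (c / 2) ≤ ‖(A ^ n).mulVec v‖) := by
      rw [← frequently_or_distrib]
      exact Filter.Frequently.of_forall hvor
    rcases this with h | h
    · exact ⟨u, h⟩
    · exact ⟨v, h⟩
  obtain ⟨φ, hφmono, hφ⟩ := Filter.extraction_of_frequently_atTop hfreq
  -- normalized vectors on the sphere
  have hrpos : ∀ k : ℕ, 0 < ‖(A ^ φ k).mulVec v0‖ := fun k =>
    lt_of_lt_of_le (by positivity) (hφ k)
  set z : ℕ → Vd d := fun k => (‖(A ^ φ k).mulVec v0‖)⁻¹ • (A ^ φ k).mulVec v0 with hz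
  have hzs : ∀ k, z k ∈ Metric.sphere (0 : Vd d) 1 := by
    intro k
    simp only [hz, Metric.mem_sphere, dist_zero_right, norm_smul, norm_inv, norm_norm]
    exact inv_mul_cancel₀ (hrpos k).ne'
  obtain ⟨zl, hzl, ψ, hψmono, hψtend⟩ := (isCompact_sphere (0 : Vd d) 1).tendsto_subseq hzs
  -- small perturbations stay in C
  obtain ⟨ε, hε0, hball⟩ := Metric.isOpen_iff.mp hC.1 x hx
  have hv00 : v0 ≠ 0 := by
    rintro rfl
    simpa [Matrix.mulVec_zero] using hrpos 0
  set e : ℝ := ε / (2 * ‖v0‖) with he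
  have hnv0 : 0 < ‖v0‖ := norm_pos_iff.mpr hv00
  have he0 : 0 < e := by positivity
  have hxp : x + e • v0 ∈ C := by
    apply hball
    simp only [Metric.mem_ball, dist_eq_norm, add_sub_cancel_left, norm_smul,
      Real.norm_eq_abs, abs_of_pos he0]
    rw [he]; rw [div_mul_eq_mul_div, div_lt_iff₀ (by positivity)]; ring_nf; nlinarith
  have hxm : x - e • v0 ∈ C := by
    apply hball
    simp only [Metric.mem_ball, dist_eq_norm, sub_sub_cancel_left, norm_neg, norm_smul,
      Real.norm_eq_abs, abs_of_pos he0]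
    rw [he]; rw [div_mul_eq_mul_div, div_lt_iff₀ (by positivity)]; ring_nf; nlinarith
  -- the scaled image of x tends to 0
  set r : ℕ → ℝ := fun k => ‖(A ^ φ (ψ k)).mulVec v0‖ with hr
  set p : ℕ → Vd d := fun k => (r k)⁻¹ • (A ^ φ (ψ k)).mulVec x with hp
  have hK0 : 0 ≤ K := by
    have := le_trans (norm_nonneg _) (hK 0)
    simpa using this
  have hptend : Filter.Tendsto p atTop (nhds 0) := by
    apply squeeze_zero_norm (a := fun k => (2 * K / c) * (lp / am) ^ (φ (ψ k)))
    · intro k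
      have hrk : am ^ (φ (ψ k)) * (c / 2) ≤ r k := hφ (ψ k)
      have hrk0 : 0 < r k := hrpos (ψ k)
      have : ‖p k‖ = (r k)⁻¹ * ‖(A ^ φ (ψ k)).mulVec x‖ := by
        simp only [hp, norm_smul, Real.norm_eq_abs, abs_of_pos (inv_pos.mpr hrk0)]
      rw [this]
      have h1 : (r k)⁻¹ ≤ (am ^ (φ (ψ k)) * (c / 2))⁻¹ :=
        inv_anti₀ (by positivity) hrk
      calc (r k)⁻¹ * ‖(A ^ φ (ψ k)).mulVec x‖
          ≤ (am ^ (φ (ψ k)) * (c / 2))⁻¹ * (K * lp ^ (φ (ψ k))) := by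
            apply mul_le_mul h1 (hK _) (norm_nonneg _) (by positivity)
        _ = (2 * K / c) * (lp / am) ^ (φ (ψ k)) := by
            rw [div_pow, mul_inv, ← inv_pow]
            field_simp
            ring_nf; rw [← mul_pow, mul_inv_cancel₀ ham0.ne', one_pow, one_mul]
    · have hlt1 : lp / am < 1 := (div_lt_one ham0).mpr hgt
      have h0 : (0:ℝ) ≤ lp / am := by positivity
      have hbase := tendsto_pow_atTop_nhds_zero_of_lt_one h0 hlt1
      have hcomp : Filter.Tendsto (fun k => φ (ψ k)) atTop atTop :=
        (hφmono.comp hψmono).tendsto_atTop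
      simpa using ((hbase.comp hcomp).const_mul (2 * K / c))
  -- limits in the closure
  have hlim : ∀ s : ℝ, (∀ k : ℕ, p k + s • z (ψ k) ∈ closure C) →
      s • zl ∈ closure C := by
    intro s hmem
    have htend : Filter.Tendsto (fun k => p k + s • z (ψ k)) atTop
        (nhds (0 + s • zl)) :=
      hptend.add ((hψtend.const_smul s))
    rw [zero_add] at htend
    exact isClosed_closure.mem_of_tendsto htend (Filter.Eventually.of_forall hmem)
  have hsum : ∀ (s : ℝ) (k : ℕ), p k + s • z (ψ k)
      = (r k)⁻¹ • (A ^ φ (ψ k)).mulVec (x + s • v0) := by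
    intro s k
    simp only [hp, hz, hr, Matrix.mulVec_add, Matrix.mulVec_smul, smul_add]
    rw [smul_comm]
  have hmem : ∀ (s : ℝ), x + s • v0 ∈ C → s • zl ∈ closure C := by
    intro s hs
    refine hlim s (fun k => ?_)
    rw [hsum s k]
    exact closure_smul_mem hC (inv_pos.mpr (hrpos (ψ k)))
      (closure_pow_mulVec_mem hpres _ (subset_closure hs))
  have h1 : e • zl ∈ closure C := hmem e hxp
  have h2 : (-e) • zl ∈ closure C := hmem (-e) (by rw [neg_smul, ← sub_eq_add_neg]; exact hxm)
  have h3 : e • zl ∈ closure C ∩ (-(closure C)) := by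
    refine ⟨h1, Set.mem_neg.mpr ?_⟩
    rw [← neg_smul]
    exact h2
  have h4 : e • zl = (0 : Vd d) := hC.2.2.2.2 h3
  have h5 : zl = 0 := by
    rcases smul_eq_zero.mp h4 with h | h
    · exact absurd h he0.ne'
    · exact h
  rw [h5] at hzl
  simp at hzl

lemma ofRealHom_coe : ⇑Complex.ofRealHom = Complex.ofReal := rfl

lemma pow_mulVec_eigen_real {d : ℕ} {M : Matrix (Fin (d + 1)) (Fin (d + 1)) ℝ}
    {y : Vd d} {α : ℝ} (h : M.mulVec y = α • y) (n : ℕ) :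
    (M ^ n).mulVec y = α ^ n • y := by
  induction n with
  | zero => simp [Matrix.one_mulVec]
  | succ n ih =>
    rw [pow_succ', ← Matrix.mulVec_mulVec, ih, Matrix.mulVec_smul, h, smul_smul, ← pow_succ]

lemma real_eigen_to_complex {d : ℕ} {M : Matrix (Fin (d + 1)) (Fin (d + 1)) ℝ}
    {y : Vd d} {α : ℝ} (h : M.mulVec y = α • y) :
    (M.map Complex.ofReal).mulVec (fun j => (y j : ℂ)) = (α : ℂ) • (fun j => (y j : ℂ)) := by
  funext j
  have h1 := congrFun h j
  simp only [Pi.smul_apply, smul_eq_mul] at h1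
  simp only [Pi.smul_apply, smul_eq_mul, Matrix.mulVec, dotProduct, Matrix.map_apply]
  rw [← Complex.ofReal_mul, ← h1]
  push_cast [Matrix.mulVec, dotProduct]
  rfl

lemma principal_aux {d : ℕ} (C : Set (Vd d)) (hC : IsProperConvexCone C)
    (A : Matrix (Fin (d + 1)) (Fin (d + 1)) ℝ) (hA : IsUnit A)
    (hpres : PreservesCone C A)
    (a b : Vd d) (ha0 : a ≠ 0) (hb0 : b ≠ 0)
    (hxC : a + b ∈ C)
    (lp lm : ℝ) (hlm0 : 0 < lm) (hlt : lm < lp)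
    (hap : A.mulVec a = lp • a) (hbm : A.mulVec b = lm • b) :
    lp = specMax A ∧ lm = specMin A := by
  unfold specMax specMin
  have hlp0 : 0 < lp := lt_trans hlm0 hlt
  have hdet : IsUnit A.det := (Matrix.isUnit_iff_isUnit_det A).mp hA
  set B := A⁻¹ with hBdef
  have hBA : B * A = 1 := Matrix.nonsing_inv_mul A hdet
  have hBa : B.mulVec a = lp⁻¹ • a := by
    have h1 : B.mulVec (A.mulVec a) = a := by
      rw [Matrix.mulVec_mulVec, hBA, Matrix.one_mulVec]
    rw [hap, Matrix.mulVec_smul] at h1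
    calc B.mulVec a = lp⁻¹ • (lp • B.mulVec a) := by
          rw [smul_smul, inv_mul_cancel₀ hlp0.ne', one_smul]
      _ = lp⁻¹ • a := by rw [h1]
  have hBb : B.mulVec b = lm⁻¹ • b := by
    have h1 : B.mulVec (A.mulVec b) = b := by
      rw [Matrix.mulVec_mulVec, hBA, Matrix.one_mulVec]
    rw [hbm, Matrix.mulVec_smul] at h1
    calc B.mulVec b = lm⁻¹ • (lm • B.mulVec b) := by
          rw [smul_smul, inv_mul_cancel₀ hlm0.ne', one_smul]
      _ = lm⁻¹ • b := by rw [h1]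
  have hBpres : PreservesCone C B := by
    unfold PreservesCone at hpres ⊢
    have hcomp : B.mulVec ∘ A.mulVec = (B * A).mulVec :=
      funext fun v => Matrix.mulVec_mulVec v B A
    calc B.mulVec '' C = B.mulVec '' (A.mulVec '' C) := by rw [hpres]
      _ = (B.mulVec ∘ A.mulVec) '' C := (Set.image_comp _ _ _).symm
      _ = C := by rw [hcomp, hBA]; simp [Matrix.one_mulVec]
  -- growth bounds
  set K : ℝ := ‖a‖ + ‖b‖ with hKdef
  have hgrowA : ∀ n : ℕ, ‖(A ^ n).mulVec (a + b)‖ ≤ K * lp ^ n := by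
    intro n
    rw [Matrix.mulVec_add, pow_mulVec_eigen_real hap, pow_mulVec_eigen_real hbm]
    calc ‖lp ^ n • a + lm ^ n • b‖ ≤ ‖lp ^ n • a‖ + ‖lm ^ n • b‖ := norm_add_le _ _
      _ = lp ^ n * ‖a‖ + lm ^ n * ‖b‖ := by
          rw [norm_smul, norm_smul, Real.norm_eq_abs, Real.norm_eq_abs,
            abs_of_pos (pow_pos hlp0 n), abs_of_pos (pow_pos hlm0 n)]
      _ ≤ lp ^ n * ‖a‖ + lp ^ n * ‖b‖ := by
          have : lm ^ n ≤ lp ^ n := pow_le_pow_left₀ hlm0.le hlt.le n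
          nlinarith [norm_nonneg b]
      _ = K * lp ^ n := by rw [hKdef]; ring
  have hgrowB : ∀ n : ℕ, ‖(B ^ n).mulVec (a + b)‖ ≤ K * (lm⁻¹) ^ n := by
    intro n
    rw [Matrix.mulVec_add, pow_mulVec_eigen_real hBa, pow_mulVec_eigen_real hBb]
    have hlpi : (0:ℝ) < lp⁻¹ := inv_pos.mpr hlp0
    have hlmi : (0:ℝ) < lm⁻¹ := inv_pos.mpr hlm0
    calc ‖(lp⁻¹) ^ n • a + (lm⁻¹) ^ n • b‖ ≤ ‖(lp⁻¹) ^ n • a‖ + ‖(lm⁻¹) ^ n • b‖ :=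
          norm_add_le _ _
      _ = (lp⁻¹) ^ n * ‖a‖ + (lm⁻¹) ^ n * ‖b‖ := by
          rw [norm_smul, norm_smul, Real.norm_eq_abs, Real.norm_eq_abs,
            abs_of_pos (pow_pos hlpi n), abs_of_pos (pow_pos hlmi n)]
      _ ≤ (lm⁻¹) ^ n * ‖a‖ + (lm⁻¹) ^ n * ‖b‖ := by
          have h1 : lp⁻¹ ≤ lm⁻¹ := by
            apply inv_anti₀ hlm0 hlt.le
          have : (lp⁻¹) ^ n ≤ (lm⁻¹) ^ n := pow_le_pow_left₀ hlpi.le h1 n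
          nlinarith [norm_nonneg a]
      _ = K * (lm⁻¹) ^ n := by rw [hKdef]; ring
  -- complexification
  set M := A.map Complex.ofReal with hMdef
  set N := B.map Complex.ofReal with hNdef
  have hNM : N * M = 1 := by
    rw [hNdef, hMdef, ← ofRealHom_coe, ← Matrix.map_mul (f := Complex.ofRealHom), hBA]
    exact Matrix.map_one _ (by simp) (by simp)
  -- lp and lm are eigenvalues
  have hca : (fun j => ((a j : ℝ) : ℂ)) ≠ 0 := by
    obtain ⟨j, hj⟩ : ∃ j, a j ≠ 0 := by
      by_contra h; push_neg at h; exact ha0 (funext h)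
    intro h
    exact hj (by simpa using congrFun h j)
  have hcb : (fun j => ((b j : ℝ) : ℂ)) ≠ 0 := by
    obtain ⟨j, hj⟩ : ∃ j, b j ≠ 0 := by
      by_contra h; push_neg at h; exact hb0 (funext h)
    intro h
    exact hj (by simpa using congrFun h j)
  have hlpmem : (lp : ℂ) ∈ spectrum ℂ M :=
    mem_spectrum_of_eigen M _ _ hca (real_eigen_to_complex hap)
  have hlmmem : (lm : ℂ) ∈ spectrum ℂ M :=
    mem_spectrum_of_eigen M _ _ hcb (real_eigen_to_complex hbm)
  -- upper and lower bounds on the spectrum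
  have hub : ∀ s ∈ (fun z : ℂ => ‖z‖) '' spectrum ℂ M, s ≤ lp := by
    rintro s ⟨μ, hμ, rfl⟩
    obtain ⟨w, hw0, hw⟩ := eigen_of_mem_spectrum M μ hμ
    exact key_spec_le hC hpres hxC hlp0 hgrowA hw0 hw
  have hlb : ∀ s ∈ (fun z : ℂ => ‖z‖) '' spectrum ℂ M, lm ≤ s := by
    rintro s ⟨μ, hμ, rfl⟩
    obtain ⟨w, hw0, hw⟩ := eigen_of_mem_spectrum M μ hμ
    have hμ0 : μ ≠ 0 := by
      rintro rfl
      apply hw0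
      have : N.mulVec (M.mulVec w) = w := by
        rw [Matrix.mulVec_mulVec, hNM, Matrix.one_mulVec]
      rw [hw] at this
      simpa [Matrix.mulVec_zero] using this.symm
    have hNw : N.mulVec w = μ⁻¹ • w := by
      have h1 : N.mulVec (M.mulVec w) = w := by
        rw [Matrix.mulVec_mulVec, hNM, Matrix.one_mulVec]
      rw [hw, Matrix.mulVec_smul] at h1
      calc N.mulVec w = μ⁻¹ • (μ • N.mulVec w) := by
            rw [smul_smul, inv_mul_cancel₀ hμ0, one_smul]
        _ = μ⁻¹ • w := by rw [h1]
    have hkey : ‖μ⁻¹‖ ≤ lm⁻¹ :=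
      key_spec_le hC hBpres hxC (inv_pos.mpr hlm0) hgrowB hw0 hNw
    rw [norm_inv] at hkey
    have habs0 : 0 < ‖μ‖ := by simpa using hμ0
    calc lm = (lm⁻¹)⁻¹ := by rw [inv_inv]
      _ ≤ (‖μ‖)⁻¹⁻¹ := by
          apply inv_anti₀ (by positivity) hkey
      _ = ‖μ‖ := by rw [inv_inv]
  have hlpS : lp ∈ (fun z : ℂ => ‖z‖) '' spectrum ℂ M :=
    ⟨(lp : ℂ), hlpmem, by simp [abs_of_pos hlp0]⟩
  have hlmS : lm ∈ (fun z : ℂ => ‖z‖) '' spectrum ℂ M :=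
    ⟨(lm : ℂ), hlmmem, by simp [abs_of_pos hlm0]⟩
  constructor
  · exact le_antisymm (le_csSup ⟨lp, hub⟩ hlpS) (csSup_le ⟨lp, hlpS⟩ hub)
  · exact le_antisymm (le_csInf ⟨lm, hlmS⟩ hlb) (csInf_le ⟨lm, hlb⟩ hlmS)

/-- Every axis of `g` is principal: if `A_g = [A⁺, A⁻]` is an axis of `g` with lift
eigenvalues `λ₊ > λ₋` at `A⁺`, `A⁻`, then `λ₊ = λ_max(g̃)` and `λ₋ = λ_min(g̃)`. -/
theorem axis_is_principal {d : ℕ} (C : Set (Vd d)) (hC : IsProperConvexCone C)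
    (A : Matrix (Fin (d + 1)) (Fin (d + 1)) ℝ) (hA : IsUnit A)
    (hpres : PreservesCone C A) (hτ : 0 < translationLength C A)
    (a b : Vd d) (ha : a ∈ frontier C) (hb : b ∈ frontier C) (ha0 : a ≠ 0) (hb0 : b ≠ 0)
    (haxis : openSegCone a b ⊆ C)
    (lp lm : ℝ) (hlm0 : 0 < lm) (hlt : lm < lp)
    (hap : A.mulVec a = lp • a) (hbm : A.mulVec b = lm • b) :
    lp = specMax A ∧ lm = specMin A := by
  have hxC : a + b ∈ C := haxis ⟨1, 1, one_pos, one_pos, by simp⟩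
  exact principal_aux C hC A hA hpres a b ha0 hb0 hxC lp lm hlm0 hlt hap hbm
end

section
/- Let Ω be a properly convex domain and g ∈ Aut(Ω) with τ_Ω(g) > 0, with attracting fixed point a and repelling fixed point b in the closure of Ω. If c is a fixed point of g in the closure of Ω that is neither attracting nor repelling, then [a,c] ∪ [b,c] ⊂ ∂Ω. -/
open Set Filter

/-! Let `p, q, r` be eigenvectors in the closed cone with eigenvalues `α, β, γ`, `|α|, |β| < γ`
(for `[b,c]` use `g` and `r = a`; for `[a,c]` use `g⁻¹` and `r = b`). If a point `v` of `[p,q]`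
were in the open cone, so would be `v - ε r` for small `ε > 0`; applying `gⁿ` and rescaling by
`γ⁻ⁿ` keeps it in the cone while the `p` and `q` components die out, so `-ε r` lies in the closed
cone, contradicting properness. The order `λ_min < μ < λ_max` comes from the positivity of
eigenvalues with eigenvectors in the closed cone. -/

open Topology Matrix

lemma Module.End.pow_apply_of_apply_eq_smul {R M : Type*} [CommSemiring R] [AddCommMonoid M]
    [Module R M] {f : Module.End R M} {p : M} {α : R} (h : f p = α • p) (n : ℕ) :
    (f ^ n) p = α ^ n • p := by
  induction n with
  | zero => simp
  | succ n ih => rw [pow_succ', Module.End.mul_apply, ih, map_smul, h, smul_smul, pow_succ]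

section

variable {E : Type*} [AddCommGroup E] [Module ℝ E] [TopologicalSpace E] [ContinuousSMul ℝ E]
  {C : Set E}

lemma smul_mem_closure_of_forall_smul_mem (hsmul : ∀ x ∈ C, ∀ t : ℝ, 0 < t → t • x ∈ C)
    {x : E} (hx : x ∈ closure C) {t : ℝ} (ht : 0 < t) : t • x ∈ closure C :=
  map_mem_closure (continuous_const_smul t) hx fun y hy => hsmul y hy t ht

lemma notMem_of_tendsto_inv_pow_smul_pow_apply [IsTopologicalAddGroup E] (hopen : IsOpen C)
    (hsmul : ∀ x ∈ C, ∀ t : ℝ, 0 < t → t • x ∈ C) (hpointed : closure C ∩ -closure C ⊆ {0})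
    {f : Module.End ℝ E} (hf : MapsTo f C C) {r : E} (hr : r ∈ closure C) (hr0 : r ≠ 0)
    {γ : ℝ} (hγ : 0 < γ) (hfr : f r = γ • r) {v : E}
    (hv : Tendsto (fun n : ℕ => (γ ^ n)⁻¹ • (f ^ n) v) atTop (𝓝 0)) : v ∉ C := by
  intro hvC
  have hperturb : ∀ᶠ ε in 𝓝[>] (0 : ℝ), v - ε • r ∈ C := by
    have hlim : Tendsto (fun ε : ℝ => v - ε • r) (𝓝 0) (𝓝 v) := by
      simpa using tendsto_const_nhds.sub ((tendsto_id (x := 𝓝 (0 : ℝ))).smul_const r)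
    exact (hlim.eventually (hopen.mem_nhds hvC)).filter_mono nhdsWithin_le_nhds
  obtain ⟨ε, hεC, hε⟩ := (hperturb.and self_mem_nhdsWithin).exists
  have hiter : ∀ n : ℕ, (γ ^ n)⁻¹ • (f ^ n) v - ε • r ∈ C := fun n => by
    have hn := hsmul _ ((hf.iterate n) hεC) _ (inv_pos.mpr (pow_pos hγ n))
    have hcancel : (γ ^ n)⁻¹ * ε * γ ^ n = ε := by field_simp
    rwa [← Module.End.pow_apply, map_sub, map_smul, Module.End.pow_apply_of_apply_eq_smul hfr,
      smul_sub, smul_smul, smul_smul, hcancel] at hn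
  have hneg : -(ε • r) ∈ closure C :=
    mem_closure_of_tendsto (by simpa using hv.sub_const (ε • r))
      (Eventually.of_forall hiter)
  have hzero : ε • r = 0 :=
    hpointed ⟨smul_mem_closure_of_forall_smul_mem hsmul hr hε, by simpa using hneg⟩
  exact hr0 ((smul_eq_zero.mp hzero).resolve_left hε.ne')

lemma tendsto_inv_pow_smul_pow_apply_of_apply_eq_smul {f : Module.End ℝ E} {p : E} {α γ : ℝ}
    (hfp : f p = α • p) (hαγ : |α| < γ) :
    Tendsto (fun n : ℕ => (γ ^ n)⁻¹ • (f ^ n) p) atTop (𝓝 0) := by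
  have hγ : 0 < γ := (abs_nonneg α).trans_lt hαγ
  have hratio : |α / γ| < 1 := by
    rwa [abs_div, abs_of_pos hγ, div_lt_one hγ]
  have hpow : ∀ n : ℕ, (γ ^ n)⁻¹ • (f ^ n) p = (α / γ) ^ n • p := fun n => by
    rw [Module.End.pow_apply_of_apply_eq_smul hfp, smul_smul, div_pow, inv_mul_eq_div]
  simpa [hpow] using (tendsto_pow_atTop_nhds_zero_of_abs_lt_one hratio).smul_const p

end

section

variable {d : ℕ} {C : Set (Vd d)}

lemma segCone_subset_closure (hconv : Convex ℝ C)
    (hsmul : ∀ x ∈ C, ∀ t : ℝ, 0 < t → t • x ∈ C) {p q : Vd d} (hp : p ∈ closure C)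
    (hq : q ∈ closure C) : segCone p q ⊆ closure C := by
  rintro v ⟨s, t, hs, ht, hst, rfl⟩
  have hmem := hconv.closure hp hq (div_nonneg hs hst.le) (div_nonneg ht hst.le)
    (by field_simp)
  have hscaled := smul_mem_closure_of_forall_smul_mem hsmul hmem hst
  rwa [smul_add, smul_smul, smul_smul, mul_div_cancel₀ _ hst.ne',
    mul_div_cancel₀ _ hst.ne'] at hscaled

lemma segCone_subset_frontier_of_mulVec_eq_smul (hC : IsProperConvexCone C)
    {M : Matrix (Fin (d + 1)) (Fin (d + 1)) ℝ} (hM : MapsTo M.mulVec C C) {p q r : Vd d}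
    (hp : p ∈ closure C) (hq : q ∈ closure C) (hr : r ∈ closure C) (hr0 : r ≠ 0)
    {α β γ : ℝ} (hMp : M *ᵥ p = α • p) (hMq : M *ᵥ q = β • q) (hMr : M *ᵥ r = γ • r)
    (hαγ : |α| < γ) (hβγ : |β| < γ) : segCone p q ⊆ frontier C := by
  obtain ⟨hopen, hconv, -, hsmul, hpointed⟩ := hC
  intro v hv
  rw [hopen.frontier_eq]
  refine ⟨segCone_subset_closure hconv hsmul hp hq hv, ?_⟩
  obtain ⟨s, t, -, -, -, rfl⟩ := hv
  refine notMem_of_tendsto_inv_pow_smul_pow_apply (f := M.mulVecLin) hopen hsmul hpointed hM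
    hr hr0 ((abs_nonneg α).trans_lt hαγ) hMr ?_
  have hp_lim := tendsto_inv_pow_smul_pow_apply_of_apply_eq_smul (f := M.mulVecLin) hMp hαγ
  have hq_lim := tendsto_inv_pow_smul_pow_apply_of_apply_eq_smul (f := M.mulVecLin) hMq hβγ
  simpa [smul_comm _ s, smul_comm _ t] using (hp_lim.const_smul s).add (hq_lim.const_smul t)

end

section

variable {d : ℕ} {C : Set (Vd d)} {A : Matrix (Fin (d + 1)) (Fin (d + 1)) ℝ}

lemma PreservesCone.mapsTo (h : PreservesCone C A) : MapsTo A.mulVec C C :=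
  fun _ hx => h ▸ mem_image_of_mem _ hx

lemma PreservesCone.inv (h : PreservesCone C A) (hA : IsUnit A) : PreservesCone C A⁻¹ := by
  have hinv : A⁻¹ * A = 1 := Matrix.nonsing_inv_mul A ((Matrix.isUnit_iff_isUnit_det A).mp hA)
  unfold PreservesCone
  conv_lhs => rw [← h, image_image]
  simp [Matrix.mulVec_mulVec, hinv]

lemma pos_of_mulVec_eq_smul_of_mem_closure (hC : IsProperConvexCone C) (hA : IsUnit A)
    (hmaps : MapsTo A.mulVec C C) {w : Vd d} (hw : w ∈ closure C) (hw0 : w ≠ 0) {ν : ℝ}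
    (hν : A *ᵥ w = ν • w) : 0 < ν := by
  obtain ⟨-, -, -, hsmul, hpointed⟩ := hC
  have hν0 : ν ≠ 0 := by
    rintro rfl
    exact hw0 (Matrix.mulVec_injective_iff_isUnit.mpr hA (by simpa using hν))
  refine lt_of_le_of_ne (not_lt.mp fun hneg => ?_) hν0.symm
  have himage : ν • w ∈ closure C :=
    hν ▸ map_mem_closure (Continuous.matrix_mulVec continuous_const continuous_id) hw hmaps
  have hzero : ν • w = 0 :=
    hpointed ⟨himage,
      by simpa using smul_mem_closure_of_forall_smul_mem hsmul hw (neg_pos.mpr hneg)⟩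
  exact (smul_eq_zero.mp hzero).elim hν0 hw0

lemma Matrix.inv_mulVec_eq_inv_smul_of_mulVec_eq_smul {n K : Type*} [Fintype n] [DecidableEq n]
    [Field K] {B : Matrix n n K} (hB : IsUnit B) {w : n → K} {ν : K} (h : B *ᵥ w = ν • w) :
    B⁻¹ *ᵥ w = ν⁻¹ • w := by
  have hw : w = ν • B⁻¹ *ᵥ w := by
    rw [← Matrix.mulVec_smul, ← h, Matrix.mulVec_mulVec,
      Matrix.nonsing_inv_mul _ ((Matrix.isUnit_iff_isUnit_det B).mp hB), Matrix.one_mulVec]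
  rcases eq_or_ne ν 0 with rfl | hν
  · rw [zero_smul] at hw
    simp [hw]
  · exact ((inv_smul_eq_iff₀ hν).mpr hw).symm

lemma Matrix.ofReal_mem_spectrum_map_of_mulVec_eq_smul {n : Type*} [Fintype n] [DecidableEq n]
    {B : Matrix n n ℝ} {w : n → ℝ} (hw0 : w ≠ 0) {ν : ℝ} (h : B *ᵥ w = ν • w) :
    (ν : ℂ) ∈ spectrum ℂ (B.map Complex.ofReal) := by
  have hroot : B.charpoly.IsRoot ν := by
    rw [← Matrix.mem_spectrum_iff_isRoot_charpoly, ← Matrix.spectrum_toLin',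
      ← Module.End.hasEigenvalue_iff_mem_spectrum]
    exact Module.End.hasEigenvalue_of_hasEigenvector ⟨Module.End.mem_eigenspace_iff.mpr h, hw0⟩
  rw [Matrix.mem_spectrum_iff_isRoot_charpoly]
  exact Matrix.charpoly_map B Complex.ofRealHom ▸ hroot.map

lemma specMin_le_abs_of_mulVec_eq_smul {w : Vd d} (hw0 : w ≠ 0) {ν : ℝ}
    (h : A *ᵥ w = ν • w) : specMin A ≤ |ν| :=
  csInf_le ⟨0, forall_mem_image.mpr fun z _ => norm_nonneg z⟩
    ⟨ν, Matrix.ofReal_mem_spectrum_map_of_mulVec_eq_smul hw0 h, Complex.norm_real ν⟩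

lemma abs_le_specMax_of_mulVec_eq_smul {w : Vd d} (hw0 : w ≠ 0) {ν : ℝ}
    (h : A *ᵥ w = ν • w) : |ν| ≤ specMax A :=
  le_csSup ((Matrix.finite_spectrum _).image _).bddAbove
    ⟨ν, Matrix.ofReal_mem_spectrum_map_of_mulVec_eq_smul hw0 h, Complex.norm_real ν⟩

end

theorem segments_to_neutral_fixed_point_in_boundary_general {d : ℕ} (C : Set (Vd d))
    (hC : IsProperConvexCone C)
    (A : Matrix (Fin (d + 1)) (Fin (d + 1)) ℝ) (hA : IsUnit A)
    (hpres : PreservesCone C A)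
    (a b c : Vd d)
    (haC : a ∈ closure C) (hbC : b ∈ closure C) (hcC : c ∈ closure C)
    (ha0 : a ≠ 0) (hb0 : b ≠ 0) (hc0 : c ≠ 0)
    (hatt : A.mulVec a = specMax A • a) (hrep : A.mulVec b = specMin A • b)
    (μ : ℝ) (hfix : A.mulVec c = μ • c) (hμmax : μ ≠ specMax A) (hμmin : μ ≠ specMin A) :
    segCone a c ⊆ frontier C ∧ segCone b c ⊆ frontier C := by
  have hμ : 0 < μ := pos_of_mulVec_eq_smul_of_mem_closure hC hA hpres.mapsTo hcC hc0 hfix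
  have hm : 0 < specMin A := pos_of_mulVec_eq_smul_of_mem_closure hC hA hpres.mapsTo hbC hb0 hrep
  have hmμ : specMin A < μ :=
    (abs_of_pos hμ ▸ specMin_le_abs_of_mulVec_eq_smul hc0 hfix).lt_of_ne' hμmin
  have hμM : μ < specMax A :=
    (abs_of_pos hμ ▸ abs_le_specMax_of_mulVec_eq_smul hc0 hfix).lt_of_ne hμmax
  have hmM : specMin A < specMax A := hmμ.trans hμM
  have hM : 0 < specMax A := hμ.trans hμM
  constructor
  · refine segCone_subset_frontier_of_mulVec_eq_smul hC (hpres.inv hA).mapsTo haC hcC hbC hb0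
      (inv_mulVec_eq_inv_smul_of_mulVec_eq_smul hA hatt)
      (inv_mulVec_eq_inv_smul_of_mulVec_eq_smul hA hfix)
      (inv_mulVec_eq_inv_smul_of_mulVec_eq_smul hA hrep) ?_ ?_
    · rw [abs_of_pos (inv_pos.mpr hM)]
      exact (inv_lt_inv₀ hM hm).mpr hmM
    · rw [abs_of_pos (inv_pos.mpr hμ)]
      exact (inv_lt_inv₀ hμ hm).mpr hmμ
  · exact segCone_subset_frontier_of_mulVec_eq_smul hC hpres.mapsTo hbC hcC haC ha0 hrep hfix
      hatt (by rwa [abs_of_pos hm]) (by rwa [abs_of_pos hμ])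

/-- If `g` has positive translation length with attracting fixed point `a` and repelling
fixed point `b`, and `c` is a fixed point of `g` that is neither attracting nor repelling,
then `[a,c] ∪ [b,c] ⊆ ∂Ω`. -/
theorem segments_to_neutral_fixed_point_in_boundary {d : ℕ} (C : Set (Vd d))
    (hC : IsProperConvexCone C)
    (A : Matrix (Fin (d + 1)) (Fin (d + 1)) ℝ) (hA : IsUnit A)
    (hpres : PreservesCone C A) (hτ : 0 < translationLength C A)
    (a b c : Vd d)
    (haC : a ∈ closure C) (hbC : b ∈ closure C) (hcC : c ∈ closure C)
    (ha0 : a ≠ 0) (hb0 : b ≠ 0) (hc0 : c ≠ 0)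
    (hatt : A.mulVec a = specMax A • a) (hrep : A.mulVec b = specMin A • b)
    (μ : ℝ) (hfix : A.mulVec c = μ • c) (hμmax : μ ≠ specMax A) (hμmin : μ ≠ specMin A) :
    segCone a c ⊆ frontier C ∧ segCone b c ⊆ frontier C :=
  segments_to_neutral_fixed_point_in_boundary_general C hC A hA hpres a b c haC hbC hcC ha0 hb0 hc0
    hatt hrep μ hfix hμmax hμmin
end

section
/- Let Ω be a properly convex domain and γ ∈ Aut(Ω) with τ_Ω(γ) > 0. Then the projective subspace P(E_γ̃) spanned by the eigenspaces of a lift γ̃ for eigenvalues of maximal modulus satisfies Ω ∩ P(E_γ̃) = ∅; consequently the ω-limit set of γ on Ω is contained in ∂Ω ∩ P(E_γ̃). -/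
open Set Filter

/-- The sum of the eigenspaces of (the complexification of) `A` for eigenvalues of
maximal modulus. -/
noncomputable def maxModEigenSubmodule {d : ℕ}
    (A : Matrix (Fin (d + 1)) (Fin (d + 1)) ℝ) : Submodule ℂ (Fin (d + 1) → ℂ) :=
  ⨆ μ ∈ {μ : ℂ | ‖μ‖ = specMax A},
    Module.End.eigenspace (Matrix.toLin' (A.map Complex.ofReal)) μ

/-- The set of real vectors lying (after complexification) in the sum of eigenspaces of `A`
for eigenvalues of maximal modulus; its projectivization is `P(E_γ̃)`. -/
def Eset {d : ℕ} (A : Matrix (Fin (d + 1)) (Fin (d + 1)) ℝ) : Set (Vd d) :=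
  {v | (fun i => (v i : ℂ)) ∈ maxModEigenSubmodule A}


/-- The complex modulus as an absolute value (removed from Mathlib; reintroduced here). -/
noncomputable def Complex.abs : AbsoluteValue ℂ ℝ where
  toFun z := ‖z‖
  map_mul' := norm_mul
  nonneg' := norm_nonneg
  eq_zero' _ := norm_eq_zero
  add_le' := norm_add_le

lemma Complex.norm_eq_abs (z : ℂ) : ‖z‖ = Complex.abs z := rfl

lemma Complex.abs_ofReal (r : ℝ) : Complex.abs (r : ℂ) = |r| := Complex.norm_real r

lemma Complex.abs_natCast (n : ℕ) : Complex.abs (n : ℂ) = n := Complex.norm_natCast n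

lemma Complex.abs_conj (z : ℂ) : Complex.abs ((starRingEnd ℂ) z) = Complex.abs z :=
  Complex.norm_conj z

namespace HilbertAux

noncomputable section

variable {d : ℕ}

def cx (v : Vd d) : Fin (d + 1) → ℂ := fun i => (v i : ℂ)

lemma cx_add (v w : Vd d) : cx (v + w) = cx v + cx w := by
  funext i; simp [cx]

lemma cx_smul (r : ℝ) (v : Vd d) : cx (r • v) = (r : ℂ) • cx v := by
  funext i; simp [cx]

lemma cx_zero : cx (0 : Vd d) = 0 := by funext i; simp [cx]

lemma cx_eq_zero {v : Vd d} : cx v = 0 ↔ v = 0 := by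
  constructor
  · intro h; funext i
    have := congrFun h i
    simpa [cx] using this
  · rintro rfl; exact cx_zero

lemma cx_sum {ι : Type*} (s : Finset ι) (f : ι → Vd d) :
    cx (∑ i ∈ s, f i) = ∑ i ∈ s, cx (f i) := by
  funext j
  simp [cx, Finset.sum_apply]

lemma norm_cx (v : Vd d) : ‖cx v‖ = ‖v‖ := by
  rw [Pi.norm_def, Pi.norm_def]
  congr 1
  refine Finset.sup_congr rfl fun i _ => ?_
  simp [cx]

lemma cx_mulVec (M : Matrix (Fin (d + 1)) (Fin (d + 1)) ℝ) (v : Vd d) :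
    cx (M.mulVec v) = (M.map Complex.ofReal).mulVec (cx v) := by
  funext i
  simp [cx, Matrix.mulVec, dotProduct, Matrix.map_apply]

section Cone

variable {C : Set (Vd d)}

lemma zero_not_mem (hC : IsProperConvexCone C) : (0 : Vd d) ∉ C := by
  obtain ⟨hopen, _, _, hsmul, hproper⟩ := hC
  intro h0
  obtain ⟨ε, hε, hball⟩ := Metric.isOpen_iff.mp hopen 0 h0
  have hmem : ∀ w : Vd d, w ≠ 0 → w ∈ C := by
    intro w hw
    have hnorm : ‖w‖ ≠ 0 := by simpa using hw
    have hwpos : (0:ℝ) < ‖w‖ := lt_of_le_of_ne (norm_nonneg w) (Ne.symm hnorm)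
    have hsm : (ε / (2 * ‖w‖)) • w ∈ C := by
      apply hball
      rw [Metric.mem_ball, dist_zero_right, norm_smul]
      rw [Real.norm_eq_abs, abs_of_pos (by positivity)]
      rw [div_mul_eq_mul_div, mul_comm]
      calc ‖w‖ * ε / (2 * ‖w‖) = ε / 2 := by field_simp
        _ < ε := by linarith
    have := hsmul _ hsm (2 * ‖w‖ / ε) (by positivity)
    rwa [smul_smul, div_mul_div_comm, mul_comm ε, div_self (by positivity), one_smul] at this
  set v : Vd d := fun _ => 1 with hv
  have hvne : v ≠ 0 := by
    intro h; have := congrFun h 0; simp [hv] at this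
  have h1 : v ∈ closure C := subset_closure (hmem v hvne)
  have h2 : v ∈ -(closure C) := by
    rw [Set.mem_neg]
    exact subset_closure (hmem (-v) (by simpa using hvne))
  have := hproper ⟨h1, h2⟩
  simp only [mem_singleton_iff] at this
  exact hvne this

lemma closure_smul_mem (hC : IsProperConvexCone C) {t : ℝ} (ht : 0 < t) {y : Vd d}
    (hy : y ∈ closure C) : t • y ∈ closure C := by
  obtain ⟨u, hu, hlim⟩ := mem_closure_iff_seq_limit.mp hy
  exact mem_closure_of_tendsto (hlim.const_smul t)
    (Eventually.of_forall fun n => hC.2.2.2.1 _ (hu n) t ht)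

lemma closure_add_mem (hC : IsProperConvexCone C) {a b : Vd d}
    (ha : a ∈ closure C) (hb : b ∈ closure C) : a + b ∈ closure C := by
  have hconv : Convex ℝ (closure C) := hC.2.1.closure
  have hmid : (1/2 : ℝ) • a + (1/2 : ℝ) • b ∈ closure C :=
    hconv ha hb (by norm_num) (by norm_num) (by norm_num)
  have := closure_smul_mem hC (t := 2) (by norm_num) hmid
  rw [smul_add, smul_smul, smul_smul] at this
  norm_num at this
  exact this

end Cone


section ConeLemmas
variable {C : Set (Vd d)} {A : Matrix (Fin (d + 1)) (Fin (d + 1)) ℝ}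

lemma mulVec_mem (hpres : PreservesCone C A) {x : Vd d} (hx : x ∈ C) : A.mulVec x ∈ C := by
  have h : A.mulVec x ∈ A.mulVec '' C := ⟨x, hx, rfl⟩
  rwa [hpres] at h

lemma pow_mulVec_mem (hpres : PreservesCone C A) (n : ℕ) {x : Vd d} (hx : x ∈ C) :
    (A ^ n).mulVec x ∈ C := by
  induction n with
  | zero => simpa [Matrix.one_mulVec] using hx
  | succ n ih =>
    rw [pow_succ', ← Matrix.mulVec_mulVec]
    exact mulVec_mem hpres ih

def SS (C : Set (Vd d)) (x y : Vd d) : Set ℝ := {t : ℝ | 0 < t ∧ t • y - x ∈ closure C}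

lemma coneDist_eq (C : Set (Vd d)) (x y : Vd d) :
    coneDist C x y = Real.log (sInf (SS C x y) * sInf (SS C y x)) := rfl

lemma SS_nonempty (hC : IsProperConvexCone C) {x y : Vd d} (hx : x ∈ C) (hy : y ∈ C) :
    (SS C x y).Nonempty := by
  obtain ⟨ε, hε, hball⟩ := Metric.isOpen_iff.mp hC.1 y hy
  obtain ⟨n, hn⟩ := exists_nat_gt (‖x‖ / ε)
  have hn0 : (0:ℝ) < (n:ℝ) + 1 := by positivity
  refine ⟨(n:ℝ) + 1, hn0, ?_⟩
  have hmem : y - ((n:ℝ)+1)⁻¹ • x ∈ C := by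
    apply hball
    rw [Metric.mem_ball, dist_eq_norm]
    have h0 : y - (((n:ℝ)+1)⁻¹ • x) - y = -(((n:ℝ)+1)⁻¹ • x) := by abel
    rw [h0, norm_neg, norm_smul, Real.norm_eq_abs, abs_of_pos (by positivity)]
    have hxn : ‖x‖ < ε * ((n:ℝ)+1) := by
      have h1 : ‖x‖/ε < (n:ℝ)+1 := lt_of_lt_of_le hn (by linarith)
      calc ‖x‖ = (‖x‖/ε) * ε := by field_simp
        _ < ((n:ℝ)+1) * ε := mul_lt_mul_of_pos_right h1 hε
        _ = ε * ((n:ℝ)+1) := by ring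
    calc ((n:ℝ)+1)⁻¹ * ‖x‖ < ((n:ℝ)+1)⁻¹ * (ε * ((n:ℝ)+1)) :=
          mul_lt_mul_of_pos_left hxn (by positivity)
      _ = ε := by field_simp
  have := hC.2.2.2.1 _ hmem ((n:ℝ)+1) hn0
  rw [smul_sub, smul_smul, mul_inv_cancel₀ (ne_of_gt hn0), one_smul] at this
  exact subset_closure this

lemma one_le_of_mem (hC : IsProperConvexCone C) {x y : Vd d} (hx : x ∈ C)
    {t s : ℝ} (ht : t ∈ SS C x y) (hs : s ∈ SS C y x) : 1 ≤ t * s := by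
  obtain ⟨ht0, htm⟩ := ht
  obtain ⟨hs0, hsm⟩ := hs
  by_contra hlt
  push_neg at hlt
  have h1 : t • (s • x - y) ∈ closure C := closure_smul_mem hC ht0 hsm
  have h2 : t • (s • x - y) + (t • y - x) ∈ closure C := closure_add_mem hC h1 htm
  have heq : t • (s • x - y) + (t • y - x) = (t * s - 1) • x := by
    rw [smul_sub, smul_smul, sub_smul, one_smul]; abel
  rw [heq] at h2
  have h3 : (1 - t * s) • x ∈ closure C :=
    subset_closure (hC.2.2.2.1 x hx _ (by linarith))
  have h4 : (1 - t*s) • x ∈ -(closure C) := by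
    rw [Set.mem_neg, ← neg_smul]
    have he : -(1 - t*s) = t*s - 1 := by ring
    rw [he]; exact h2
  have := hC.2.2.2.2 ⟨h3, h4⟩
  simp only [mem_singleton_iff, smul_eq_zero] at this
  rcases this with h|h
  · linarith
  · exact zero_not_mem hC (h ▸ hx)

lemma sInf_SS_pos (hC : IsProperConvexCone C) {x y : Vd d} (hx : x ∈ C) (hy : y ∈ C) :
    0 < sInf (SS C x y) := by
  obtain ⟨s₀, hs₀⟩ := SS_nonempty hC hy hx
  have hlb : ∀ t ∈ SS C x y, 1 / s₀ ≤ t := by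
    intro t ht
    rw [div_le_iff₀ hs₀.1]
    linarith [one_le_of_mem hC hx ht hs₀]
  calc (0:ℝ) < 1 / s₀ := by have := hs₀.1; positivity
    _ ≤ sInf (SS C x y) := le_csInf (SS_nonempty hC hx hy) hlb

lemma one_le_sInf_mul (hC : IsProperConvexCone C) {x y : Vd d} (hx : x ∈ C) (hy : y ∈ C) :
    1 ≤ sInf (SS C x y) * sInf (SS C y x) := by
  have h1 := sInf_SS_pos hC hx hy
  have hlb : ∀ s ∈ SS C y x, 1 / sInf (SS C x y) ≤ s := by
    intro s hs
    have hts : ∀ t ∈ SS C x y, 1/s ≤ t := by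
      intro t ht
      rw [div_le_iff₀ hs.1]
      linarith [one_le_of_mem hC hx ht hs]
    have h2 : 1 / s ≤ sInf (SS C x y) := le_csInf (SS_nonempty hC hx hy) hts
    rw [div_le_iff₀ hs.1] at h2
    rw [div_le_iff₀ h1]
    linarith [h2]
  have hm2 : 1 / sInf (SS C x y) ≤ sInf (SS C y x) := le_csInf (SS_nonempty hC hy hx) hlb
  have := mul_le_mul_of_nonneg_left hm2 (le_of_lt h1)
  rwa [mul_one_div, div_self (ne_of_gt h1)] at this

lemma coneDist_nonneg (hC : IsProperConvexCone C) {x y : Vd d} (hx : x ∈ C) (hy : y ∈ C) :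
    0 ≤ coneDist C x y :=
  Real.log_nonneg (one_le_sInf_mul hC hx hy)

lemma tl_le (hC : IsProperConvexCone C) (hpres : PreservesCone C A) {y : Vd d} (hy : y ∈ C) :
    translationLength C A ≤ coneDist C y (A.mulVec y) := by
  apply csInf_le
  · refine ⟨0, ?_⟩
    rintro r ⟨z, hz, rfl⟩
    exact coneDist_nonneg hC hz (mulVec_mem hpres hz)
  · exact ⟨y, hy, rfl⟩

end ConeLemmas

lemma phase_subseq : ∀ (T : Finset ℂ), (∀ μ ∈ T, Complex.abs μ = 1) →
    ∀ (n : ℕ → ℕ), StrictMono n → ∃ φ : ℕ → ℕ, StrictMono φ ∧ ∃ w : ℂ → ℂ,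
      ∀ μ ∈ T, Complex.abs (w μ) = 1 ∧
        Tendsto (fun k => μ ^ (n (φ k))) atTop (nhds (w μ)) := by
  classical
  intro T
  induction T using Finset.induction_on with
  | empty =>
    intro _ n hn
    exact ⟨id, strictMono_id, fun _ => 1, by simp⟩
  | @insert a s ha ih =>
    intro hT n hn
    obtain ⟨φ, hφ, w, hw⟩ := ih (fun μ hμ => hT μ (Finset.mem_insert_of_mem hμ)) n hn
    have habs : ∀ k : ℕ, ‖a ^ (n (φ k))‖ = 1 := by
      intro k
      rw [norm_pow, Complex.norm_eq_abs, hT a (Finset.mem_insert_self a s), one_pow]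
    have hbdd : ∀ k : ℕ, a ^ (n (φ k)) ∈ Metric.closedBall (0:ℂ) 1 := by
      intro k
      rw [Metric.mem_closedBall, dist_zero_right, habs k]
    obtain ⟨wa, _, ψ, hψ, hlim⟩ :=
      tendsto_subseq_of_bounded Metric.isBounded_closedBall hbdd
    refine ⟨φ ∘ ψ, hφ.comp hψ, fun μ => if μ = a then wa else w μ, ?_⟩
    intro μ hμ
    rcases Finset.mem_insert.mp hμ with heq | hμs
    case inl =>
      rw [heq]
      simp only [if_pos rfl]
      constructor
      · have hnorm := hlim.norm
        rw [Function.comp_def] at hnorm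
        rw [show (fun k => ‖a ^ n (φ (ψ k))‖) = fun _ => (1:ℝ) from funext fun k => habs (ψ k)]
          at hnorm
        have h1 : ‖wa‖ = 1 := tendsto_nhds_unique hnorm tendsto_const_nhds
        exact h1
      · have := hlim
        rw [Function.comp_def] at this
        exact this
    case inr =>
      have hne : μ ≠ a := fun h => ha (h ▸ hμs)
      simp only [if_neg hne]
      obtain ⟨h1, h2⟩ := hw μ hμs
      exact ⟨h1, h2.comp (hψ.tendsto_atTop)⟩

lemma choose_ratio_tendsto {j K : ℕ} (hjK : j < K) :
    Tendsto (fun n : ℕ => ((n.choose j : ℝ) / (n.choose K : ℝ))) atTop (nhds 0) := by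
  have hbound : ∀ n : ℕ, 2*K + 2 ≤ n →
      (n.choose j : ℝ) / (n.choose K : ℝ)
        ≤ ((K.factorial : ℝ) * 2^K) / (n:ℝ)^(K-j) := by
    intro n hn
    have hn0 : (0:ℝ) < (n:ℝ) := by
      have h0 : 0 < n := by omega
      exact_mod_cast h0
    have hK1 : K ≤ n + 1 := by omega
    have hcast : ((n + 1 - K : ℕ) : ℝ) = (n:ℝ) + 1 - K := by
      rw [Nat.cast_sub hK1]
      push_cast
      ring
    have hpc := Nat.pow_le_choose K n (α := ℝ)
    rw [hcast] at hpc
    have hKn : (2*(K:ℝ) + 2) ≤ (n:ℝ) := by exact_mod_cast hn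
    have h2 : ((n:ℝ)/2)^K ≤ ((n:ℝ)+1-(K:ℝ))^K := by
      apply pow_le_pow_left₀ (by positivity)
      linarith
    have hhalf : ((n:ℝ)/2)^K / (K.factorial : ℝ) ≤ (n.choose K : ℝ) := by
      refine le_trans ?_ hpc
      gcongr
    have hnum : (n.choose j : ℝ) ≤ (n:ℝ)^j := by
      exact_mod_cast Nat.choose_le_pow n j
    have hdpos : (0:ℝ) < ((n:ℝ)/2)^K / (K.factorial:ℝ) := by positivity
    have hfrac : (n.choose j : ℝ)/(n.choose K : ℝ)
        ≤ (n:ℝ)^j / (((n:ℝ)/2)^K / (K.factorial:ℝ)) :=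
      div_le_div₀ (by positivity) hnum hdpos hhalf
    refine le_trans hfrac (le_of_eq ?_)
    have hsplit : (n:ℝ)^K = (n:ℝ)^(K-j) * (n:ℝ)^j := by
      rw [← pow_add]
      congr 1
      omega
    rw [div_pow, div_div_eq_mul_div, div_div_eq_mul_div, div_eq_div_iff (by positivity) (by positivity)]
    rw [hsplit]
    ring
  have hnn : ∀ n : ℕ, 0 ≤ (n.choose j : ℝ)/(n.choose K : ℝ) := fun n => by positivity
  apply squeeze_zero' (Eventually.of_forall hnn)
  · filter_upwards [eventually_ge_atTop (2*K+2)] with n hn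
    exact hbound n hn
  · apply Tendsto.div_atTop tendsto_const_nhds
    exact (tendsto_pow_atTop (by omega : K - j ≠ 0)).comp tendsto_natCast_atTop_atTop

lemma tendsto_cx_inv {u : ℕ → Vd d} {Lc : Fin (d+1) → ℂ}
    (h : Tendsto (fun k => cx (u k)) atTop (nhds Lc)) :
    ∃ ℓ : Vd d, cx ℓ = Lc ∧ Tendsto u atTop (nhds ℓ) := by
  have hcoord : ∀ i, Tendsto (fun k => cx (u k) i) atTop (nhds (Lc i)) := by
    intro i
    exact (continuous_apply i).continuousAt.tendsto.comp h
  have him : ∀ i, (Lc i).im = 0 := by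
    intro i
    have h1 : Tendsto (fun k => (cx (u k) i).im) atTop (nhds ((Lc i).im)) :=
      (Complex.continuous_im.tendsto _).comp (hcoord i)
    have h2 : (fun k => (cx (u k) i).im) = fun _ => (0:ℝ) := funext fun k => by simp [cx]
    rw [h2] at h1
    exact tendsto_nhds_unique h1 tendsto_const_nhds
  refine ⟨fun i => (Lc i).re, ?_, ?_⟩
  · funext i
    apply Complex.ext
    · simp [cx]
    · simp [cx, him i]
  · rw [tendsto_pi_nhds]
    intro i
    have h1 : Tendsto (fun k => (cx (u k) i).re) atTop (nhds ((Lc i).re)) :=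
      (Complex.continuous_re.tendsto _).comp (hcoord i)
    have h2 : (fun k => (cx (u k) i).re) = fun k => u k i := funext fun k => by simp [cx]
    rwa [h2] at h1

lemma end_pow_apply (B : Module.End ℂ (Fin (d+1) → ℂ)) (μ : ℂ) (D : ℕ) (v : Fin (d+1) → ℂ)
    (hv : ((B - μ • 1) ^ D) v = 0) (n : ℕ) :
    (B ^ n) v = ∑ j ∈ Finset.range D,
      ((n.choose j : ℂ) * μ ^ (n - j)) • ((B - μ • 1) ^ j) v := by
  classical
  set N : Module.End ℂ (Fin (d+1) → ℂ) := B - μ • 1 with hN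
  have hB : B = N + μ • 1 := by rw [hN]; abel
  have hcomm : Commute N (μ • (1 : Module.End ℂ (Fin (d+1) → ℂ))) :=
    (Commute.one_right N).smul_right μ
  have happ : (B ^ n) v = ∑ j ∈ Finset.range (n+1),
      ((n.choose j : ℂ) * μ ^ (n-j)) • (N ^ j) v := by
    rw [hB, hcomm.add_pow]
    rw [LinearMap.sum_apply]
    refine Finset.sum_congr rfl fun j hj => ?_
    rw [Module.End.mul_apply, Module.End.mul_apply]
    rw [Module.End.natCast_apply, smul_pow, one_pow]
    rw [LinearMap.smul_apply, Module.End.one_apply]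
    rw [map_smul, map_nsmul, ← Nat.cast_smul_eq_nsmul ℂ (n.choose j), smul_smul, mul_comm]
  have htrunc : ∀ j, D ≤ j → (N ^ j) v = 0 := by
    intro j hj
    have hsplit : N ^ j = N ^ (j - D) * N ^ D := by
      rw [← pow_add]
      congr 1
      omega
    rw [hsplit, Module.End.mul_apply, hv, map_zero]
  set F : ℕ → (Fin (d+1) → ℂ) := fun j => ((n.choose j : ℂ) * μ ^ (n-j)) • (N ^ j) v with hF
  have h1 : ∑ j ∈ Finset.range (n+1), F j = ∑ j ∈ Finset.range (max (n+1) D), F j := by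
    apply Finset.sum_subset (Finset.range_subset_range.mpr (le_max_left _ _))
    intro j _ hj
    have hjn : n < j := by
      simp only [Finset.mem_range, not_lt] at hj
      omega
    rw [hF]
    simp only []
    rw [Nat.choose_eq_zero_of_lt hjn]
    simp
  have h2 : ∑ j ∈ Finset.range D, F j = ∑ j ∈ Finset.range (max (n+1) D), F j := by
    apply Finset.sum_subset (Finset.range_subset_range.mpr (le_max_right _ _))
    intro j _ hj
    have hjD : D ≤ j := by
      simp only [Finset.mem_range, not_lt] at hj
      omega
    rw [hF]
    simp only []
    rw [htrunc j hjD]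
    simp
  rw [happ, h1, ← h2]



section Part1
variable {C : Set (Vd d)} {A : Matrix (Fin (d + 1)) (Fin (d + 1)) ℝ}

/-- mulVec by a matrix distributes over finset sums -/
lemma mulVec_sum {α : Type*} [CommRing α] {ι : Type*} (M : Matrix (Fin (d + 1)) (Fin (d + 1)) α)
    (s : Finset ι) (f : ι → (Fin (d + 1) → α)) :
    M.mulVec (∑ i ∈ s, f i) = ∑ i ∈ s, M.mulVec (f i) := by
  have := map_sum (Matrix.mulVecLin M) f s
  simpa only [Matrix.mulVecLin_apply] using this

lemma convex_avg_mem (hC : IsProperConvexCone C) {m : ℕ} (hm : 1 ≤ m) (p : ℕ → Vd d)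
    (hp : ∀ n < m, p n ∈ C) : (m : ℝ)⁻¹ • ∑ n ∈ Finset.range m, p n ∈ C := by
  have hm0 : (0:ℝ) < (m:ℝ) := by exact_mod_cast hm
  have := hC.2.1.sum_mem (t := Finset.range m) (w := fun _ => (m:ℝ)⁻¹) (z := p)
    (fun i _ => by positivity)
    (by simp [Finset.sum_const, Finset.card_range]; field_simp)
    (fun i hi => hp i (Finset.mem_range.mp hi))
  rwa [← Finset.smul_sum] at this

theorem translationLength_nonpos (hC : IsProperConvexCone C) (hA : IsUnit A)
    (hpres : PreservesCone C A) {x : Vd d} (hx : x ∈ C) (hxE : x ∈ Eset A) :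
    translationLength C A ≤ 0 := by
  classical
  set L : ℝ := specMax A with hLdef
  set Ac : Matrix (Fin (d + 1)) (Fin (d + 1)) ℂ := A.map Complex.ofReal with hAc
  -- inverse matrix
  set P : Matrix (Fin (d + 1)) (Fin (d + 1)) ℝ := ↑(hA.unit⁻¹) with hP
  have hAP : A * P = 1 := by
    have h := hA.unit.mul_inv
    rwa [IsUnit.unit_spec] at h
  have hPA : P * A = 1 := by
    have h := hA.unit.inv_mul
    rwa [IsUnit.unit_spec] at h
  have hcomm : Commute A P := by unfold Commute SemiconjBy; rw [hAP, hPA]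
  have hAPn : ∀ n : ℕ, A ^ n * P ^ n = 1 := fun n => by
    rw [← hcomm.mul_pow, hAP, one_pow]
  have hPAn : ∀ n : ℕ, P ^ n * A ^ n = 1 := fun n => by
    rw [← hcomm.symm.mul_pow, hPA, one_pow]
  set rh := (Complex.ofRealHom.mapMatrix :
      Matrix (Fin (d+1)) (Fin (d+1)) ℝ →+* Matrix (Fin (d+1)) (Fin (d+1)) ℂ) with hrh
  have hrhA : rh A = Ac := rfl
  set Pc : Matrix (Fin (d + 1)) (Fin (d + 1)) ℂ := P.map Complex.ofReal with hPc
  have hrhP : rh P = Pc := rfl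
  have hAPcn : ∀ n : ℕ, Ac ^ n * Pc ^ n = 1 := fun n => by
    have := congrArg rh (hAPn n)
    rwa [map_mul, map_pow, map_pow, map_one, hrhA, hrhP] at this
  have hPAcn : ∀ n : ℕ, Pc ^ n * Ac ^ n = 1 := fun n => by
    have := congrArg rh (hPAn n)
    rwa [map_mul, map_pow, map_pow, map_one, hrhA, hrhP] at this
  have hmapPow : ∀ n : ℕ, (A ^ n).map Complex.ofReal = Ac ^ n := fun n => by
    have := congrArg rh (rfl : A ^ n = A ^ n)
    calc (A ^ n).map Complex.ofReal = rh (A ^ n) := rfl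
      _ = Ac ^ n := by rw [map_pow, hrhA]
  have hcancel : ∀ (n : ℕ) (z : Fin (d+1) → ℂ), (Ac ^ n).mulVec z = 0 → z = 0 := by
    intro n z hz
    have : (Pc ^ n).mulVec ((Ac ^ n).mulVec z) = z := by
      rw [Matrix.mulVec_mulVec, hPAcn n, Matrix.one_mulVec]
    rw [hz, Matrix.mulVec_zero] at this
    exact this.symm
  -- decomposition of cx x into eigenvectors
  have hmem : cx x ∈ maxModEigenSubmodule A := hxE
  rw [maxModEigenSubmodule, iSup_subtype'] at hmem
  obtain ⟨f, hfmem, hfsum⟩ := (Submodule.mem_iSup_iff_exists_finsupp _ _).mp hmem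
  set T := f.support with hT
  have hsum : ∑ μ ∈ T, f μ = cx x := by
    rw [← hfsum, Finsupp.sum]
  have habs : ∀ μ : {μ : ℂ // μ ∈ {μ : ℂ | Complex.abs μ = specMax A}},
      Complex.abs ↑μ = L := fun μ => by rw [hLdef]; exact μ.2
  have hAz : ∀ μ, Ac.mulVec (f μ) = (↑μ : ℂ) • f μ := by
    intro μ
    have h1 := hfmem μ
    rw [Module.End.mem_eigenspace_iff] at h1
    rw [← Matrix.toLin'_apply]
    exact h1
  have hfne : ∀ μ ∈ T, f μ ≠ 0 := fun μ hμ => Finsupp.mem_support_iff.mp hμ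
  have hμne : ∀ μ ∈ T, (↑μ : ℂ) ≠ 0 := by
    intro μ hμ h0
    apply hfne μ hμ
    apply hcancel 1
    rw [pow_one, hAz μ, h0, zero_smul]
  have hTne : T.Nonempty := by
    rcases Finset.eq_empty_or_nonempty T with h | h
    · exfalso
      rw [h, Finset.sum_empty] at hsum
      exact zero_not_mem hC (by rwa [cx_eq_zero.mp hsum.symm] at hx)
    · exact h
  obtain ⟨μ₀, hμ₀⟩ := hTne
  have hL : 0 < L := by
    rw [← habs μ₀]
    exact AbsoluteValue.pos Complex.abs (hμne μ₀ hμ₀)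
  have hLne : (L : ℝ) ≠ 0 := ne_of_gt hL
  -- eigen dynamics
  have hAzn : ∀ (n : ℕ) (μ), (Ac ^ n).mulVec (f μ) = ((↑μ : ℂ) ^ n) • f μ := by
    intro n μ
    induction n with
    | zero => simp [Matrix.one_mulVec]
    | succ n ih =>
      rw [pow_succ', ← Matrix.mulVec_mulVec, ih, Matrix.mulVec_smul, hAz μ, smul_smul,
        pow_succ]
  have hPz : ∀ μ ∈ T, Pc.mulVec (f μ) = ((↑μ : ℂ)⁻¹) • f μ := by
    intro μ hμ
    have h2 : (↑μ : ℂ) • Pc.mulVec (f μ) = f μ := by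
      rw [← Matrix.mulVec_smul, ← hAz μ, Matrix.mulVec_mulVec]
      have hPcAc : Pc * Ac = 1 := by simpa using hPAcn 1
      rw [hPcAc, Matrix.one_mulVec]
    have h3 := congrArg (fun v => (↑μ:ℂ)⁻¹ • v) h2
    simpa [smul_smul, inv_mul_cancel₀ (hμne μ hμ)] using h3
  have hPzn : ∀ (n : ℕ), ∀ μ ∈ T, (Pc ^ n).mulVec (f μ) = (((↑μ : ℂ)⁻¹) ^ n) • f μ := by
    intro n μ hμ
    induction n with
    | zero => simp [Matrix.one_mulVec]
    | succ n ih =>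
      rw [pow_succ', ← Matrix.mulVec_mulVec, ih, Matrix.mulVec_smul, hPz μ hμ, smul_smul,
        pow_succ]
  -- the forward and backward normalized orbits
  set ff : ℕ → Vd d := fun n => (L ^ n)⁻¹ • (A ^ n).mulVec x with hff
  set gg : ℕ → Vd d := fun n => (L ^ n) • (P ^ n).mulVec x with hgg
  have hcxff : ∀ n, cx (ff n) = ∑ μ ∈ T, (((L:ℂ) ^ n)⁻¹ * (↑μ:ℂ) ^ n) • f μ := by
    intro n
    rw [hff]
    simp only []
    rw [cx_smul, cx_mulVec, hmapPow n, ← hsum, mulVec_sum, Finset.smul_sum]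
    refine Finset.sum_congr rfl fun μ hμ => ?_
    rw [hAzn n μ, smul_smul]
    push_cast
    ring_nf
  have hcxgg : ∀ n, cx (gg n) = ∑ μ ∈ T, ((L:ℂ) ^ n * ((↑μ:ℂ)⁻¹) ^ n) • f μ := by
    intro n
    rw [hgg]
    simp only []
    rw [cx_smul, cx_mulVec]
    have : (P ^ n).map Complex.ofReal = Pc ^ n := by
      calc (P ^ n).map Complex.ofReal = rh (P ^ n) := rfl
        _ = Pc ^ n := by rw [map_pow, hrhP]
    rw [this, ← hsum, mulVec_sum, Finset.smul_sum]
    refine Finset.sum_congr rfl fun μ hμ => ?_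
    rw [hPzn n μ hμ, smul_smul]
    push_cast
    ring_nf
  set K₁ : ℝ := ∑ μ ∈ T, ‖f μ‖ with hK₁
  have hK₁0 : 0 ≤ K₁ := Finset.sum_nonneg fun μ _ => norm_nonneg _
  have hnorm_sum : ∀ (c : _ → ℂ), (∀ μ ∈ T, Complex.abs (c μ) = 1) →
      ‖∑ μ ∈ T, c μ • f μ‖ ≤ K₁ := by
    intro c hc
    calc ‖∑ μ ∈ T, c μ • f μ‖ ≤ ∑ μ ∈ T, ‖c μ • f μ‖ := norm_sum_le _ _
      _ = ∑ μ ∈ T, ‖f μ‖ := by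
          refine Finset.sum_congr rfl fun μ hμ => ?_
          rw [norm_smul]
          rw [show ‖c μ‖ = Complex.abs (c μ) from rfl, hc μ hμ, one_mul]
  have hffbd : ∀ n, ‖ff n‖ ≤ K₁ := by
    intro n
    rw [← norm_cx, hcxff n]
    apply hnorm_sum
    intro μ hμ
    rw [map_mul, map_inv₀, map_pow, map_pow, habs μ]
    rw [show Complex.abs (L:ℂ) = |L| from Complex.abs_ofReal L, abs_of_pos hL]
    field_simp
  have hggbd : ∀ n, ‖gg n‖ ≤ K₁ := by
    intro n
    rw [← norm_cx, hcxgg n]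
    apply hnorm_sum
    intro μ hμ
    rw [map_mul, map_pow, map_pow, map_inv₀, habs μ]
    rw [show Complex.abs (L:ℂ) = |L| from Complex.abs_ofReal L, abs_of_pos hL]
    field_simp
    rw [← mul_pow, mul_one_div_cancel hLne, one_pow]
  -- ball at x
  obtain ⟨ε, hε, hball⟩ := Metric.isOpen_iff.mp hC.1 x hx
  set R : ℝ := ε / (2 * K₁ + 1) with hR
  have hR0 : 0 < R := div_pos hε (by linarith)
  have hffC : ∀ n, ff n ∈ C := by
    intro n
    exact hC.2.2.2.1 _ (pow_mulVec_mem hpres n hx) _ (inv_pos.mpr (pow_pos hL n))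
  -- the key interior claim
  have hCL : ∀ m n : ℕ, n ≤ m → ∀ r : ℝ, |r| ≤ R → ff n + r • (ff m - x) ∈ C := by
    intro m n hnm r hr
    set w : Vd d := r • (ff (m - n) - gg n) with hw
    have hwnorm : ‖w‖ < ε := by
      rw [hw, norm_smul, Real.norm_eq_abs]
      have h1 : ‖ff (m-n) - gg n‖ ≤ 2 * K₁ :=
        le_trans (norm_sub_le _ _) (by linarith [hffbd (m-n), hggbd n])
      calc |r| * ‖ff (m-n) - gg n‖ ≤ R * (2*K₁) :=
            mul_le_mul hr h1 (norm_nonneg _) (le_of_lt hR0)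
        _ = ε * (2*K₁) / (2*K₁+1) := by rw [hR]; ring
        _ < ε := by rw [div_lt_iff₀ (by positivity)]; nlinarith
    have hxw : x + w ∈ C := by
      apply hball
      rw [Metric.mem_ball, dist_eq_norm, add_sub_cancel_left]
      exact hwnorm
    have hpow' : (L:ℝ)^n * L^(m-n) = L^m := by
      rw [← pow_add, Nat.add_sub_cancel' hnm]
    have hkey : (L ^ n)⁻¹ • (A ^ n).mulVec (x + w) = ff n + r • (ff m - x) := by
      rw [Matrix.mulVec_add, smul_add]
      congr 1
      rw [hw, Matrix.mulVec_smul, Matrix.mulVec_sub]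
      have e1 : (A ^ n).mulVec (ff (m-n)) = (L ^ (m-n))⁻¹ • (A ^ m).mulVec x := by
        rw [hff]
        simp only []
        rw [Matrix.mulVec_smul, Matrix.mulVec_mulVec, ← pow_add, Nat.add_sub_cancel' hnm]
      have e2 : (A ^ n).mulVec (gg n) = L ^ n • x := by
        rw [hgg]
        simp only []
        rw [Matrix.mulVec_smul, Matrix.mulVec_mulVec, hAPn n, Matrix.one_mulVec]
      rw [e1, e2]
      have hinner : ((L:ℝ)^n)⁻¹ • ((L^(m-n))⁻¹ • (A^m).mulVec x - L^n • x)
          = (L^m)⁻¹ • (A^m).mulVec x - x := by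
        rw [smul_sub, smul_smul, smul_smul, ← mul_inv, hpow',
          inv_mul_cancel₀ (pow_ne_zero n hLne), one_smul]
      rw [smul_comm, hinner]
    rw [← hkey]
    exact hC.2.2.2.1 _ (pow_mulVec_mem hpres n hxw) _ (inv_pos.mpr (pow_pos hL n))
  -- averaged displacement bounds
  have habsR : |R| ≤ R := le_of_eq (abs_of_pos hR0)
  have habsnegR : |(-R)| ≤ R := by rw [abs_neg]; exact habsR
  have hτb : ∀ m : ℕ, 1 ≤ m → translationLength C A ≤ 2 * Real.log (1 + 1/(R*m)) := by
    intro m hm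
    have hmR : (0:ℝ) < (m:ℝ) := by exact_mod_cast hm
    set b : Vd d := (m:ℝ)⁻¹ • ∑ n ∈ Finset.range m, ff n with hb
    set b' : Vd d := (m:ℝ)⁻¹ • ∑ n ∈ Finset.range m, ff (n+1) with hb'
    have hkey1 : ∀ r : ℝ, |r| ≤ R → b + r • (ff m - x) ∈ C := by
      intro r hr
      have heq : b + r • (ff m - x)
          = (m:ℝ)⁻¹ • ∑ n ∈ Finset.range m, (ff n + r • (ff m - x)) := by
        rw [Finset.sum_add_distrib, Finset.sum_const, Finset.card_range, smul_add, hb]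
        congr 1
        rw [← Nat.cast_smul_eq_nsmul ℝ, smul_smul, inv_mul_cancel₀ (ne_of_gt hmR), one_smul]
      rw [heq]
      exact convex_avg_mem hC hm _ (fun n hn => hCL m n (le_of_lt hn) r hr)
    have hkey2 : ∀ r : ℝ, |r| ≤ R → b' + r • (ff m - x) ∈ C := by
      intro r hr
      have heq : b' + r • (ff m - x)
          = (m:ℝ)⁻¹ • ∑ n ∈ Finset.range m, (ff (n+1) + r • (ff m - x)) := by
        rw [Finset.sum_add_distrib, Finset.sum_const, Finset.card_range, smul_add, hb']
        congr 1
        rw [← Nat.cast_smul_eq_nsmul ℝ, smul_smul, inv_mul_cancel₀ (ne_of_gt hmR), one_smul]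
      rw [heq]
      exact convex_avg_mem hC hm _ (fun n hn => hCL m (n+1) (Nat.succ_le_of_lt hn) r hr)
    have hbC : b ∈ C := by
      have := hkey1 0 (by simpa using le_of_lt hR0)
      simpa using this
    have hb'C : b' ∈ C := by
      have := hkey2 0 (by simpa using le_of_lt hR0)
      simpa using this
    have hstep : ∀ n : ℕ, A.mulVec (ff n) = L • ff (n+1) := by
      intro n
      rw [hff]
      simp only []
      rw [Matrix.mulVec_smul, Matrix.mulVec_mulVec, ← pow_succ', smul_smul]
      congr 1
      rw [pow_succ]
      field_simp
    have hAb : A.mulVec b = L • b' := by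
      rw [hb, hb', Matrix.mulVec_smul, mulVec_sum]
      rw [smul_comm]
      congr 1
      rw [Finset.smul_sum]
      exact Finset.sum_congr rfl fun n _ => hstep n
    have hAbC : A.mulVec b ∈ C := mulVec_mem hpres hbC
    have hdiff : b' - b = (m:ℝ)⁻¹ • (ff m - x) := by
      rw [hb', hb, ← smul_sub, ← Finset.sum_sub_distrib, Finset.sum_range_sub (f := ff)]
      congr 1
      rw [hff]
      simp [Matrix.one_mulVec]
    set s : ℝ := 1/(R*m) with hs
    have hs0 : 0 < s := div_pos one_pos (mul_pos hR0 hmR)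
    have hsR : s * R = (m:ℝ)⁻¹ := by
      rw [hs]
      field_simp
    have hb'e : b' = (s*R) • (ff m - x) + b := by
      rw [← hsR] at hdiff
      exact sub_eq_iff_eq_add.mp hdiff
    have mem1 : (1+s)/L ∈ SS C b (A.mulVec b) := by
      constructor
      · exact div_pos (by linarith) hL
      · rw [hAb, smul_smul, div_mul_cancel₀ _ hLne]
        have he : (1+s) • b' - b = s • (b' + R • (ff m - x)) := by
          rw [hb'e]; module
        rw [he]
        exact subset_closure (hC.2.2.2.1 _ (hkey2 R habsR) s hs0)
    have mem2 : L*(1+s) ∈ SS C (A.mulVec b) b := by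
      constructor
      · exact mul_pos hL (by linarith)
      · rw [hAb]
        have he : (L*(1+s)) • b - L • b' = L • (s • (b + (-R) • (ff m - x))) := by
          rw [hb'e]; module
        rw [he]
        exact subset_closure (hC.2.2.2.1 _
          (hC.2.2.2.1 _ (hkey1 (-R) habsnegR) s hs0) L hL)
    have hlb1 : BddBelow (SS C b (A.mulVec b)) := ⟨0, fun t ht => le_of_lt ht.1⟩
    have hlb2 : BddBelow (SS C (A.mulVec b) b) := ⟨0, fun t ht => le_of_lt ht.1⟩
    have hm1 : sInf (SS C b (A.mulVec b)) ≤ (1+s)/L := csInf_le hlb1 mem1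
    have hm2 : sInf (SS C (A.mulVec b) b) ≤ L*(1+s) := csInf_le hlb2 mem2
    have hone := one_le_sInf_mul hC hbC hAbC
    have hm1nn : 0 ≤ sInf (SS C b (A.mulVec b)) :=
      le_csInf ⟨_, mem1⟩ fun t ht => le_of_lt ht.1
    have hm2nn : 0 ≤ sInf (SS C (A.mulVec b) b) :=
      le_csInf ⟨_, mem2⟩ fun t ht => le_of_lt ht.1
    have hprod : sInf (SS C b (A.mulVec b)) * sInf (SS C (A.mulVec b) b) ≤ (1+s)^2 := by
      calc sInf (SS C b (A.mulVec b)) * sInf (SS C (A.mulVec b) b)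
          ≤ ((1+s)/L) * (L*(1+s)) := mul_le_mul hm1 hm2 hm2nn (le_of_lt (div_pos (by linarith) hL))
        _ = (1+s)^2 := by field_simp
    calc translationLength C A ≤ coneDist C b (A.mulVec b) := tl_le hC hpres hbC
      _ ≤ Real.log ((1+s)^2) := by
          rw [coneDist_eq]
          exact Real.log_le_log (by linarith) hprod
      _ = 2 * Real.log (1+s) := by
          rw [Real.log_pow]
          norm_num
      _ = 2 * Real.log (1 + 1/(R*m)) := by rw [hs]
  -- conclude
  by_contra hc
  push_neg at hc
  obtain ⟨m₀, hm₀⟩ := exists_nat_gt (2 / (R * translationLength C A))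
  set m : ℕ := m₀ + 1 with hm
  have hm1 : 1 ≤ m := Nat.le_add_left 1 m₀
  have hmR : (0:ℝ) < (m:ℝ) := by exact_mod_cast hm1
  have h1 := hτb m hm1
  have hRm : (0:ℝ) < R * m := mul_pos hR0 hmR
  have hlog : Real.log (1 + 1/(R*m)) ≤ 1/(R*m) := by
    have h0 : (0:ℝ) < 1 + 1/(R*m) := by
      have := div_pos one_pos hRm
      linarith
    have := Real.log_le_sub_one_of_pos h0
    linarith
  have h2 : translationLength C A ≤ 2 / (R * m) := by
    calc translationLength C A ≤ 2 * Real.log (1 + 1/(R*m)) := h1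
      _ ≤ 2 * (1/(R*m)) := by linarith
      _ = 2/(R*m) := by ring
  have hmgt : 2 / (R * (m:ℝ)) < translationLength C A := by
    rw [div_lt_iff₀ hRm]
    have hm' : 2 / (R * translationLength C A) < (m:ℝ) := by
      calc 2 / (R * translationLength C A) < (m₀:ℝ) := hm₀
        _ ≤ (m:ℝ) := by exact_mod_cast Nat.le_succ m₀
    rw [div_lt_iff₀ (mul_pos hR0 hc)] at hm'
    nlinarith
  linarith

end Part1

section Part2
variable {C : Set (Vd d)} {A : Matrix (Fin (d + 1)) (Fin (d + 1)) ℝ}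

lemma toLin'_pow {α : Type*} [CommRing α] (M : Matrix (Fin (d+1)) (Fin (d+1)) α) (n : ℕ) :
    Matrix.toLin' (M ^ n) = (Matrix.toLin' M) ^ n := by
  induction n with
  | zero => rw [pow_zero, pow_zero, Matrix.toLin'_one, Module.End.one_eq_id]
  | succ n ih => rw [pow_succ, pow_succ, Matrix.toLin'_mul, ih, Module.End.mul_eq_comp]

lemma map_matrix_pow (M : Matrix (Fin (d+1)) (Fin (d+1)) ℝ) (n : ℕ) :
    (M ^ n).map Complex.ofReal = (M.map Complex.ofReal) ^ n := by
  exact map_pow Complex.ofRealHom.mapMatrix M n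

lemma cx_orbit_formula (T : Finset ℂ) (g : ℂ → (Fin (d+1) → ℂ)) (D : ℕ) (x : Vd d)
    (hxdec : cx x = ∑ μ ∈ T, g μ)
    (hnil : ∀ μ ∈ T, ((Matrix.toLin' (A.map Complex.ofReal) - μ • 1) ^ D) (g μ) = 0)
    (s : ℝ) (n : ℕ) :
    cx (s⁻¹ • (A ^ n).mulVec x) = ∑ μ ∈ T, ∑ j ∈ Finset.range D,
      (((s:ℂ))⁻¹ * ((n.choose j : ℂ) * μ ^ (n - j))) •
        ((Matrix.toLin' (A.map Complex.ofReal) - μ • 1) ^ j) (g μ) := by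
  rw [cx_smul, cx_mulVec, map_matrix_pow, ← Matrix.toLin'_apply, toLin'_pow, hxdec, map_sum]
  rw [Complex.ofReal_inv, Finset.smul_sum]
  refine Finset.sum_congr rfl fun μ hμ => ?_
  rw [end_pow_apply _ μ D _ (hnil μ hμ) n, Finset.smul_sum]
  refine Finset.sum_congr rfl fun j hj => ?_
  rw [smul_smul]

lemma coef_small_tendsto (ρ : ℝ) (hρ : 0 < ρ) (μ : ℂ) (hμ0 : μ ≠ 0)
    (hlt : Complex.abs μ < ρ) (j : ℕ) (mm : ℕ → ℕ) (hmm : Tendsto mm atTop atTop) :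
    Tendsto (fun k => (((ρ ^ mm k : ℝ) : ℂ))⁻¹ * (((mm k).choose j : ℂ) * μ ^ (mm k - j)))
      atTop (nhds 0) := by
  have haμ : 0 < Complex.abs μ := AbsoluteValue.pos Complex.abs hμ0
  set r : ℝ := Complex.abs μ / ρ with hr
  have hr0 : 0 ≤ r := by positivity
  have hr1 : r < 1 := by
    rw [hr, div_lt_one hρ]
    exact hlt
  rw [tendsto_zero_iff_norm_tendsto_zero]
  apply squeeze_zero' (g := fun k => ((mm k:ℝ)^j * r^(mm k)) / (Complex.abs μ)^j)
    (Eventually.of_forall fun k => norm_nonneg _)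
  · filter_upwards [hmm.eventually_ge_atTop j] with k hk
    set m := mm k
    have hnorm : ‖((ρ ^ m : ℝ) : ℂ)⁻¹ * ((m.choose j : ℂ) * μ ^ (m - j))‖
        = (ρ ^ m)⁻¹ * ((m.choose j : ℝ) * (Complex.abs μ) ^ (m - j)) := by
      rw [norm_mul, norm_mul, norm_inv]
      rw [Complex.norm_eq_abs, Complex.norm_eq_abs, Complex.norm_eq_abs]
      rw [Complex.abs_ofReal, abs_of_pos (pow_pos hρ m), map_pow]
      rw [Complex.abs_natCast]
    rw [hnorm]
    have hcj : ((m.choose j : ℝ)) ≤ (m:ℝ)^j := by exact_mod_cast Nat.choose_le_pow m j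
    have hpow : (Complex.abs μ) ^ (m - j) = (Complex.abs μ)^m / (Complex.abs μ)^j :=
      pow_sub₀ _ (ne_of_gt haμ) hk
    rw [hpow]
    calc (ρ ^ m)⁻¹ * ((m.choose j : ℝ) * ((Complex.abs μ)^m / (Complex.abs μ)^j))
        ≤ (ρ ^ m)⁻¹ * ((m:ℝ)^j * ((Complex.abs μ)^m / (Complex.abs μ)^j)) := by
          apply mul_le_mul_of_nonneg_left ?_ (by positivity)
          apply mul_le_mul_of_nonneg_right hcj (by positivity)
      _ = ((m:ℝ)^j * r^m) / (Complex.abs μ)^j := by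
          rw [hr, div_pow]
          field_simp
          try ring
  · have hbase : Tendsto (fun m : ℕ => (m:ℝ)^j * r^m) atTop (nhds 0) :=
      tendsto_pow_const_mul_const_pow_of_abs_lt_one j (by rwa [abs_of_nonneg hr0])
    have := (hbase.comp hmm).div_const ((Complex.abs μ)^j)
    simpa using this

lemma coef_ratio_tendsto (ρ : ℝ) (hρ : 0 < ρ) (μ : ℂ) (habs : Complex.abs μ = ρ)
    {j K : ℕ} (hjK : j < K) (mm : ℕ → ℕ) (hmm : Tendsto mm atTop atTop) :
    Tendsto (fun k => (((ρ ^ mm k * ((mm k).choose K : ℝ) : ℝ)) : ℂ)⁻¹ *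
      (((mm k).choose j : ℂ) * μ ^ (mm k - j))) atTop (nhds 0) := by
  rw [tendsto_zero_iff_norm_tendsto_zero]
  have heq : ∀ᶠ k in atTop, ‖(((ρ ^ mm k * ((mm k).choose K : ℝ) : ℝ)) : ℂ)⁻¹ *
      (((mm k).choose j : ℂ) * μ ^ (mm k - j))‖
      = (((mm k).choose j : ℝ) / ((mm k).choose K : ℝ)) * (ρ^j)⁻¹ := by
    filter_upwards [hmm.eventually_ge_atTop K] with k hk
    set m := mm k
    have hjm : j ≤ m := le_trans (le_of_lt hjK) hk
    have hcK : (0:ℝ) < (m.choose K : ℝ) := by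
      exact_mod_cast Nat.choose_pos hk
    rw [norm_mul, norm_mul, norm_inv]
    rw [Complex.norm_eq_abs, Complex.norm_eq_abs, Complex.norm_eq_abs]
    rw [Complex.abs_ofReal, abs_of_pos (mul_pos (pow_pos hρ m) hcK), map_pow, habs,
      Complex.abs_natCast]
    rw [pow_sub₀ _ (ne_of_gt hρ) hjm]
    field_simp
  have hlim : Tendsto (fun k => (((mm k).choose j : ℝ) / ((mm k).choose K : ℝ)) * (ρ^j)⁻¹)
      atTop (nhds 0) := by
    simpa using ((choose_ratio_tendsto hjK).comp hmm).mul_const ((ρ^j)⁻¹)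
  exact Tendsto.congr' (heq.mono fun k hk => hk.symm) hlim

lemma nil_mono (B : Module.End ℂ (Fin (d+1) → ℂ)) (v : Fin (d+1) → ℂ) (D j : ℕ) (hD : D ≤ j)
    (h : (B ^ D) v = 0) : (B ^ j) v = 0 := by
  have hsplit : B ^ j = B ^ (j - D) * B ^ D := by
    rw [← pow_add]
    congr 1
    omega
  rw [hsplit, Module.End.mul_apply, h, map_zero]

lemma coef_small_tendsto' (ρ : ℝ) (hρ : 0 < ρ) (μ : ℂ) (hμ0 : μ ≠ 0)
    (hlt : Complex.abs μ < ρ) (j K : ℕ) (mm : ℕ → ℕ) (hmm : Tendsto mm atTop atTop) :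
    Tendsto (fun k => (((ρ ^ mm k * ((mm k).choose K : ℝ) : ℝ)) : ℂ)⁻¹ *
      (((mm k).choose j : ℂ) * μ ^ (mm k - j))) atTop (nhds 0) := by
  rw [tendsto_zero_iff_norm_tendsto_zero]
  have hbase := coef_small_tendsto ρ hρ μ hμ0 hlt j mm hmm
  rw [tendsto_zero_iff_norm_tendsto_zero] at hbase
  apply squeeze_zero' (Eventually.of_forall fun k => norm_nonneg _) ?_ hbase
  filter_upwards [hmm.eventually_ge_atTop K] with k hk
  set m := mm k
  have hcK : (1:ℝ) ≤ (m.choose K : ℝ) := by exact_mod_cast Nat.succ_le_of_lt (Nat.choose_pos hk)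
  have h1 : ‖(((ρ ^ m * (m.choose K : ℝ)):ℝ) : ℂ)‖ = ρ^m * (m.choose K:ℝ) := by
    rw [Complex.norm_eq_abs, Complex.abs_ofReal,
      abs_of_pos (mul_pos (pow_pos hρ m) (by linarith))]
  have h2 : ‖(((ρ ^ m :ℝ)) : ℂ)‖ = ρ^m := by
    rw [Complex.norm_eq_abs, Complex.abs_ofReal, abs_of_pos (pow_pos hρ m)]
  have hL : ‖((((ρ ^ m * (m.choose K : ℝ)):ℝ)) : ℂ)⁻¹ * (((m.choose j):ℂ) * μ ^ (m - j))‖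
      = ‖((((ρ ^ m * (m.choose K : ℝ)):ℝ)) : ℂ)‖⁻¹ * (‖((m.choose j):ℂ)‖ * ‖μ ^ (m-j)‖) := by
    rw [norm_mul, norm_mul, norm_inv]
  have hRr : ‖(((ρ ^ m:ℝ)) : ℂ)⁻¹ * (((m.choose j):ℂ) * μ ^ (m - j))‖
      = ‖(((ρ ^ m:ℝ)) : ℂ)‖⁻¹ * (‖((m.choose j):ℂ)‖ * ‖μ ^ (m-j)‖) := by
    rw [norm_mul, norm_mul, norm_inv]
  rw [hL, hRr, h1, h2]
  apply mul_le_mul_of_nonneg_right ?_ (by positivity)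
  exact inv_anti₀ (pow_pos hρ m) (by nlinarith [pow_pos hρ m])

lemma lim_lemma (T : Finset ℂ) (g : ℂ → (Fin (d + 1) → ℂ)) (D : ℕ)
    (x : Vd d)
    (hxdec : cx x = ∑ μ ∈ T, g μ)
    (hnil : ∀ μ ∈ T, ((Matrix.toLin' (A.map Complex.ofReal) - μ • 1) ^ D) (g μ) = 0)
    (hTne0 : ∀ μ ∈ T, μ ≠ 0)
    (ρ : ℝ) (hρ : 0 < ρ) (hle : ∀ μ ∈ T, Complex.abs μ ≤ ρ)
    (K : ℕ) (hKD : K < D)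
    (hK : ∀ μ ∈ T, Complex.abs μ = ρ → ∀ j, K < j →
      ((Matrix.toLin' (A.map Complex.ofReal) - μ • 1) ^ j) (g μ) = 0)
    (hKex : ∃ μ ∈ T, Complex.abs μ = ρ ∧
      ((Matrix.toLin' (A.map Complex.ofReal) - μ • 1) ^ K) (g μ) ≠ 0)
    (n : ℕ → ℕ) (hn : StrictMono n) :
    ∃ φ : ℕ → ℕ, StrictMono φ ∧ ∃ ℓ : Vd d, ℓ ≠ 0 ∧
      (cx ℓ ∈ ⨆ μ ∈ {μ : ℂ | Complex.abs μ = ρ},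
        Module.End.eigenspace (Matrix.toLin' (A.map Complex.ofReal)) μ) ∧
      Tendsto (fun k => (ρ ^ (n (φ k)) * ((n (φ k)).choose K : ℝ))⁻¹ •
        (A ^ (n (φ k))).mulVec x) atTop (nhds ℓ) := by
  classical
  set B : Module.End ℂ (Fin (d+1) → ℂ) := Matrix.toLin' (A.map Complex.ofReal) with hB
  set Y : ℂ → ℕ → (Fin (d + 1) → ℂ) := fun μ j => ((B - μ • 1) ^ j) (g μ) with hY
  set Tρ := T.filter (fun μ => Complex.abs μ = ρ) with hTρ
  have hphase : ∀ ν ∈ Tρ.image (fun μ => μ / (ρ:ℂ)), Complex.abs ν = 1 := by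
    intro ν hν
    obtain ⟨μ, hμ, rfl⟩ := Finset.mem_image.mp hν
    rw [map_div₀, (Finset.mem_filter.mp hμ).2, Complex.abs_ofReal, abs_of_pos hρ,
      div_self (ne_of_gt hρ)]
  obtain ⟨φ, hφ, w, hw⟩ := phase_subseq _ hphase n hn
  set mm : ℕ → ℕ := fun k => n (φ k) with hmm_def
  have hmm : Tendsto mm atTop atTop := (hn.comp hφ).tendsto_atTop
  set E : ℂ → ℕ → (Fin (d+1) → ℂ) := fun μ j =>
    if Complex.abs μ = ρ ∧ j = K then (w (μ/(ρ:ℂ)) * (μ ^ K)⁻¹) • Y μ K else 0 with hE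
  set Lc : Fin (d+1) → ℂ := ∑ μ ∈ Tρ, (w (μ/(ρ:ℂ)) * (μ ^ K)⁻¹) • Y μ K with hLc
  have hterm : ∀ μ ∈ T, ∀ j ∈ Finset.range D,
      Tendsto (fun k => ((((ρ ^ mm k * ((mm k).choose K : ℝ)) : ℝ) : ℂ)⁻¹ *
        (((mm k).choose j : ℂ) * μ ^ (mm k - j))) • Y μ j) atTop (nhds (E μ j)) := by
    intro μ hμ j hjD
    rcases lt_or_eq_of_le (hle μ hμ) with hlt | habs
    · have h0 := coef_small_tendsto' ρ hρ μ (hTne0 μ hμ) hlt j K mm hmm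
      have hEz : E μ j = 0 := by
        rw [hE]
        simp only []
        rw [if_neg]
        rintro ⟨h1, -⟩
        exact (ne_of_lt hlt) h1
      rw [hEz]
      simpa using h0.smul_const (Y μ j)
    · by_cases hjK : j = K
      · subst hjK
        have hμTρ : μ ∈ Tρ := Finset.mem_filter.mpr ⟨hμ, habs⟩
        obtain ⟨hwabs, hwlim⟩ := hw (μ/(ρ:ℂ)) (Finset.mem_image_of_mem _ hμTρ)
        have hμ0 : μ ≠ 0 := hTne0 μ hμ
        have hcoef : ∀ᶠ k in atTop, ((((ρ ^ mm k * ((mm k).choose j : ℝ)) : ℝ) : ℂ)⁻¹ *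
            (((mm k).choose j : ℂ) * μ ^ (mm k - j)))
            = (μ/(ρ:ℂ))^(mm k) * (μ ^ j)⁻¹ := by
          filter_upwards [hmm.eventually_ge_atTop j] with k hk
          have hcK : (((mm k).choose j : ℂ)) ≠ 0 := by
            exact_mod_cast (Nat.choose_pos hk).ne'
          have hρ0 : ((ρ:ℂ)) ≠ 0 := by
            simpa using ne_of_gt hρ
          rw [pow_sub₀ _ hμ0 hk]
          push_cast
          rw [div_pow]
          field_simp
        have hEv : E μ j = (w (μ/(ρ:ℂ)) * (μ ^ j)⁻¹) • Y μ j := by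
          rw [hE]
          simp [habs]
        rw [hEv]
        have hlim : Tendsto (fun k => (μ/(ρ:ℂ))^(mm k) * (μ ^ j)⁻¹) atTop
            (nhds (w (μ/(ρ:ℂ)) * (μ ^ j)⁻¹)) := hwlim.mul_const _
        exact (hlim.congr' (hcoef.mono fun _ hk => hk.symm)).smul_const (Y μ j)
      · have hEz : E μ j = 0 := by
          rw [hE]
          simp only []
          rw [if_neg]
          rintro ⟨-, h2⟩
          exact hjK h2
        rw [hEz]
        rcases lt_or_gt_of_ne hjK with hlt' | hgt'
        · have h0 := coef_ratio_tendsto ρ hρ μ habs hlt' mm hmm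
          simpa using h0.smul_const (Y μ j)
        · have hYz : Y μ j = 0 := hK μ hμ habs j hgt'
          rw [hYz]
          simp only [smul_zero]
          exact tendsto_const_nhds
  have hsum : Tendsto (fun k => cx ((ρ ^ mm k * ((mm k).choose K : ℝ))⁻¹ •
      (A ^ mm k).mulVec x)) atTop (nhds (∑ μ ∈ T, ∑ j ∈ Finset.range D, E μ j)) := by
    have hrw : (fun k => cx ((ρ ^ mm k * ((mm k).choose K : ℝ))⁻¹ • (A ^ mm k).mulVec x))
        = fun k => ∑ μ ∈ T, ∑ j ∈ Finset.range D,
          ((((ρ ^ mm k * ((mm k).choose K : ℝ) : ℝ)) : ℂ)⁻¹ *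
            (((mm k).choose j : ℂ) * μ ^ (mm k - j))) • Y μ j :=
      funext fun k => cx_orbit_formula T g D x hxdec hnil _ (mm k)
    rw [hrw]
    apply tendsto_finset_sum
    intro μ hμ
    apply tendsto_finset_sum
    intro j hj
    exact hterm μ hμ j hj
  have hEL : ∑ μ ∈ T, ∑ j ∈ Finset.range D, E μ j = Lc := by
    have hinner : ∀ μ ∈ T, ∑ j ∈ Finset.range D, E μ j
        = if Complex.abs μ = ρ then (w (μ/(ρ:ℂ)) * (μ ^ K)⁻¹) • Y μ K else 0 := by
      intro μ hμ
      by_cases hρμ : Complex.abs μ = ρ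
      · rw [if_pos hρμ]
        have he : ∀ j, E μ j = if j = K then (w (μ/(ρ:ℂ)) * (μ ^ K)⁻¹) • Y μ K else 0 := by
          intro j
          rw [hE]
          simp only []
          by_cases hjK : j = K
          · rw [if_pos ⟨hρμ, hjK⟩, if_pos hjK]
          · rw [if_neg (by rintro ⟨-, h⟩; exact hjK h), if_neg hjK]
        rw [Finset.sum_congr rfl fun j _ => he j]
        rw [Finset.sum_ite_eq' (Finset.range D) K
          (fun _ => (w (μ/(ρ:ℂ)) * (μ ^ K)⁻¹) • Y μ K)]
        rw [if_pos (Finset.mem_range.mpr hKD)]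
      · rw [if_neg hρμ]
        apply Finset.sum_eq_zero
        intro j _
        rw [hE]
        simp only []
        rw [if_neg (by rintro ⟨h, -⟩; exact hρμ h)]
    rw [Finset.sum_congr rfl hinner, ← Finset.sum_filter, hLc, hTρ]
  rw [hEL] at hsum
  -- eigen membership of the pieces
  have hYeig : ∀ μ ∈ Tρ, Y μ K ∈ Module.End.eigenspace B μ := by
    intro μ hμ
    obtain ⟨hμT, hμρ⟩ := Finset.mem_filter.mp hμ
    rw [Module.End.mem_eigenspace_iff]
    have h1 : ((B - μ•1) ^ (K+1)) (g μ) = 0 := hK μ hμT hμρ (K+1) (Nat.lt_succ_self K)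
    have h2 : (B - μ•1) (Y μ K) = 0 := by
      rw [hY]
      simp only []
      rw [← Module.End.mul_apply, ← pow_succ']
      exact h1
    rw [LinearMap.sub_apply, LinearMap.smul_apply, Module.End.one_apply] at h2
    exact sub_eq_zero.mp h2
  obtain ⟨μs, hμsT, hμsabs, hμsY⟩ := hKex
  have hμsTρ : μs ∈ Tρ := Finset.mem_filter.mpr ⟨hμsT, hμsabs⟩
  have hLcne : Lc ≠ 0 := by
    intro h0
    have hsplit : (w (μs/(ρ:ℂ)) * (μs ^ K)⁻¹) • Y μs K
        = Lc - ∑ μ ∈ Tρ.erase μs, (w (μ/(ρ:ℂ)) * (μ ^ K)⁻¹) • Y μ K := by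
      rw [hLc, ← Finset.add_sum_erase _ _ hμsTρ]
      abel
    rw [h0, zero_sub] at hsplit
    have hmem1 : (w (μs/(ρ:ℂ)) * (μs ^ K)⁻¹) • Y μs K ∈ Module.End.eigenspace B μs :=
      Submodule.smul_mem _ _ (hYeig μs hμsTρ)
    have hmem2 : (w (μs/(ρ:ℂ)) * (μs ^ K)⁻¹) • Y μs K
        ∈ ⨆ ν ≠ μs, Module.End.eigenspace B ν := by
      rw [hsplit]
      apply Submodule.neg_mem
      apply Submodule.sum_mem
      intro μ hμ
      have hne : μ ≠ μs := Finset.ne_of_mem_erase hμ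
      apply Submodule.smul_mem
      exact le_iSup₂ (f := fun ν (_ : ν ≠ μs) => Module.End.eigenspace B ν) μ hne
        (hYeig μ (Finset.mem_of_mem_erase hμ))
    have hdis := Module.End.eigenspaces_iSupIndep B μs
    have h00 := Submodule.disjoint_def.mp hdis _ hmem1 hmem2
    have hwne : w (μs/(ρ:ℂ)) ≠ 0 := by
      obtain ⟨hwabs, -⟩ := hw _ (Finset.mem_image_of_mem _ hμsTρ)
      intro h
      rw [h] at hwabs
      simp at hwabs
    have hμs0 : μs ≠ 0 := hTne0 μs hμsT
    rcases smul_eq_zero.mp h00 with h | h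
    · exact (mul_ne_zero hwne (inv_ne_zero (pow_ne_zero _ hμs0))) h
    · exact hμsY h
  have hLcmem : Lc ∈ ⨆ μ ∈ {μ : ℂ | Complex.abs μ = ρ}, Module.End.eigenspace B μ := by
    rw [hLc]
    apply Submodule.sum_mem
    intro μ hμ
    apply Submodule.smul_mem
    exact le_iSup₂ (f := fun ν (_ : ν ∈ {μ : ℂ | Complex.abs μ = ρ}) =>
      Module.End.eigenspace B ν) μ ((Finset.mem_filter.mp hμ).2) (hYeig μ hμ)
  obtain ⟨ℓ, hcxℓ, hℓlim⟩ := tendsto_cx_inv hsum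
  refine ⟨φ, hφ, ℓ, ?_, ?_, hℓlim⟩
  · intro h
    rw [h, cx_zero] at hcxℓ
    exact hLcne hcxℓ.symm
  · rw [hcxℓ]
    exact hLcmem


lemma dec_lemma (T : Finset ℂ) (g : ℂ → (Fin (d + 1) → ℂ)) (D : ℕ) (x : Vd d)
    (hxdec : cx x = ∑ μ ∈ T, g μ)
    (hnil : ∀ μ ∈ T, ((Matrix.toLin' (A.map Complex.ofReal) - μ • 1) ^ D) (g μ) = 0)
    (hTne0 : ∀ μ ∈ T, μ ≠ 0)
    (ρ : ℝ) (hρ : 0 < ρ) (hlt : ∀ μ ∈ T, Complex.abs μ < ρ) :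
    Tendsto (fun m => (ρ ^ m)⁻¹ • (A ^ m).mulVec x) atTop (nhds 0) := by
  have hcx : Tendsto (fun m => cx ((ρ ^ m)⁻¹ • (A ^ m).mulVec x)) atTop (nhds 0) := by
    have hrw : (fun m => cx ((ρ ^ m)⁻¹ • (A ^ m).mulVec x)) = fun m =>
        ∑ μ ∈ T, ∑ j ∈ Finset.range D, ((((ρ ^ m : ℝ)) : ℂ)⁻¹ *
          ((m.choose j : ℂ) * μ ^ (m - j))) •
          ((Matrix.toLin' (A.map Complex.ofReal) - μ • 1) ^ j) (g μ) :=
      funext fun m => cx_orbit_formula T g D x hxdec hnil _ m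
    rw [hrw]
    have hall : Tendsto (fun m => ∑ μ ∈ T, ∑ j ∈ Finset.range D, ((((ρ ^ m : ℝ)) : ℂ)⁻¹ *
          ((m.choose j : ℂ) * μ ^ (m - j))) •
          ((Matrix.toLin' (A.map Complex.ofReal) - μ • 1) ^ j) (g μ)) atTop
        (nhds (∑ μ ∈ T, ∑ _j ∈ Finset.range D, (0 : Fin (d+1) → ℂ))) := by
      apply tendsto_finset_sum
      intro μ hμ
      apply tendsto_finset_sum
      intro j hj
      have := (coef_small_tendsto ρ hρ μ (hTne0 μ hμ) (hlt μ hμ) j id tendsto_id).smul_const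
        (((Matrix.toLin' (A.map Complex.ofReal) - μ • 1) ^ j) (g μ))
      simpa using this
    simpa using hall
  obtain ⟨ℓ, hcxℓ, hlim⟩ := tendsto_cx_inv hcx
  have hz : ℓ = 0 := cx_eq_zero.mp hcxℓ
  rwa [hz] at hlim

lemma mulVec_pow_cancel (hA : IsUnit A) (k : ℕ) (v : Fin (d+1) → ℂ)
    (h : (((A.map Complex.ofReal)) ^ k).mulVec v = 0) : v = 0 := by
  have hu : IsUnit (A.map Complex.ofReal) := by
    have := hA.map (Complex.ofRealHom.mapMatrix)
    exact this
  obtain ⟨U, hU⟩ := hu.pow k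
  have h2 : v = (↑U⁻¹ : Matrix (Fin (d+1)) (Fin (d+1)) ℂ).mulVec
      ((↑U : Matrix (Fin (d+1)) (Fin (d+1)) ℂ).mulVec v) := by
    rw [Matrix.mulVec_mulVec, U.inv_mul, Matrix.one_mulVec]
  rw [h2, hU, h, Matrix.mulVec_zero]

lemma eig_of_nil {Bc : Module.End ℂ (Fin (d+1) → ℂ)} {μ : ℂ} {g : Fin (d+1) → ℂ} {D : ℕ}
    (hg : g ≠ 0) (h : ((Bc - μ • 1) ^ D) g = 0) :
    ∃ v : Fin (d+1) → ℂ, v ≠ 0 ∧ Bc v = μ • v := by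
  classical
  have hex : ∃ r : ℕ, ((Bc - μ • 1) ^ r) g = 0 := ⟨D, h⟩
  have hrz : ((Bc - μ • 1) ^ (Nat.find hex)) g = 0 := Nat.find_spec hex
  have hrpos : 0 < Nat.find hex := by
    rcases Nat.eq_zero_or_pos (Nat.find hex) with h0 | h0
    · exfalso
      rw [h0, pow_zero] at hrz
      exact hg (by simpa using hrz)
    · exact h0
  refine ⟨((Bc - μ • 1) ^ (Nat.find hex - 1)) g, ?_, ?_⟩
  · intro h0
    exact Nat.find_min hex (Nat.sub_lt hrpos one_pos) h0
  · have hv0 : (Bc - μ • 1) (((Bc - μ • 1) ^ (Nat.find hex - 1)) g) = 0 := by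
      rw [← Module.End.mul_apply, ← pow_succ']
      rw [show Nat.find hex - 1 + 1 = Nat.find hex from Nat.succ_pred_eq_of_pos hrpos]
      exact hrz
    rw [LinearMap.sub_apply, LinearMap.smul_apply, Module.End.one_apply] at hv0
    exact sub_eq_zero.mp hv0

lemma conj_mulVec (M : Matrix (Fin (d+1)) (Fin (d+1)) ℝ) (z : Fin (d+1) → ℂ) :
    (fun i => (starRingEnd ℂ) ((M.map Complex.ofReal).mulVec z i)) =
      (M.map Complex.ofReal).mulVec (fun i => (starRingEnd ℂ) (z i)) := by
  funext i
  simp only [Matrix.mulVec, dotProduct, Matrix.map_apply, map_sum, map_mul,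
    Complex.conj_ofReal]

lemma spectrum_toLin'_eq :
    spectrum ℂ (Matrix.toLin' (A.map Complex.ofReal)) = spectrum ℂ (A.map Complex.ofReal) := by
  have hBct : Matrix.toLinAlgEquiv' (A.map Complex.ofReal)
      = Matrix.toLin' (A.map Complex.ofReal) := by
    apply LinearMap.ext
    intro v
    rw [Matrix.toLinAlgEquiv'_apply, Matrix.toLin'_apply]
  rw [← hBct]
  exact AlgEquiv.spectrum_eq _ _

lemma exists_real_eig_data (hA : IsUnit A) {μ₀ : ℂ} {ζ : Fin (d+1) → ℂ} (hζne : ζ ≠ 0)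
    (hζ : (Matrix.toLin' (A.map Complex.ofReal)) ζ = μ₀ • ζ) :
    ∃ (u : Vd d) (Tu : Finset ℂ) (gu : ℂ → (Fin (d+1) → ℂ)),
      u ≠ 0 ∧ cx u = ∑ μ ∈ Tu, gu μ ∧
      (∀ μ ∈ Tu, Complex.abs μ = Complex.abs μ₀ ∧ μ ≠ 0 ∧
        (Matrix.toLin' (A.map Complex.ofReal)) (gu μ) = μ • gu μ) := by
  classical
  have hμ0ne : μ₀ ≠ 0 := by
    intro h0
    apply hζne
    apply mulVec_pow_cancel hA 1
    rw [pow_one, ← Matrix.toLin'_apply, hζ, h0, zero_smul]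
  have hAc : (A.map Complex.ofReal).mulVec ζ = μ₀ • ζ := by
    rw [← Matrix.toLin'_apply]
    exact hζ
  set σζ : Fin (d+1) → ℂ := fun i => (starRingEnd ℂ) (ζ i) with hσζ
  have hconj : (Matrix.toLin' (A.map Complex.ofReal)) σζ = ((starRingEnd ℂ) μ₀) • σζ := by
    rw [Matrix.toLin'_apply, hσζ, ← conj_mulVec, hAc]
    funext i
    simp [map_mul]
  have hconjne : (starRingEnd ℂ) μ₀ ≠ 0 := by
    intro h
    apply hμ0ne
    have := congrArg (starRingEnd ℂ) h
    simpa using this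
  have main : ∀ (u : Vd d) (a b : ℂ), u ≠ 0 →
      cx u = a • ζ + b • σζ →
      ∃ (Tu : Finset ℂ) (gu : ℂ → (Fin (d+1) → ℂ)),
        u ≠ 0 ∧ cx u = ∑ μ ∈ Tu, gu μ ∧
        (∀ μ ∈ Tu, Complex.abs μ = Complex.abs μ₀ ∧ μ ≠ 0 ∧
          (Matrix.toLin' (A.map Complex.ofReal)) (gu μ) = μ • gu μ) := by
    intro u a b hune hdecu
    by_cases hμreal : (starRingEnd ℂ) μ₀ = μ₀
    · refine ⟨{μ₀}, fun _ => cx u, hune, by rw [Finset.sum_singleton], ?_⟩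
      intro μ hμ
      rw [Finset.mem_singleton] at hμ
      subst hμ
      refine ⟨rfl, hμ0ne, ?_⟩
      rw [hdecu, map_add, map_smul, map_smul, hζ, hconj, hμreal, smul_add]
      rw [smul_comm a μ ζ, smul_comm b μ σζ]
    · refine ⟨{μ₀, (starRingEnd ℂ) μ₀},
        fun μ => if μ = μ₀ then a • ζ else b • σζ, hune, ?_, ?_⟩
      · rw [Finset.sum_pair (Ne.symm hμreal), if_pos rfl, if_neg hμreal, hdecu]
      · intro μ hμ
        rcases Finset.mem_insert.mp hμ with h | h
        · refine ⟨by rw [h], by rw [h]; exact hμ0ne, ?_⟩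
          simp only []
          rw [if_pos h, map_smul, h, hζ, smul_comm]
        · rw [Finset.mem_singleton] at h
          have hne : μ ≠ μ₀ := by rw [h]; exact hμreal
          refine ⟨by rw [h, Complex.abs_conj], by rw [h]; exact hconjne, ?_⟩
          simp only []
          rw [if_neg hne, map_smul, h, hconj, smul_comm]
  by_cases hre : (fun i => ((ζ i).re : ℝ)) = (0 : Vd d)
  · -- imaginary part
    have hune : (fun i => ((ζ i).im : ℝ)) ≠ (0 : Vd d) := by
      intro h0
      apply hζne
      funext i
      have h1 : (ζ i).re = 0 := congrFun hre i
      have h2 : (ζ i).im = 0 := congrFun h0 i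
      apply Complex.ext <;> simp [h1, h2]
    obtain ⟨Tu, gu, h⟩ := main _ ((2 * Complex.I)⁻¹) (-(2 * Complex.I)⁻¹) hune (by
      funext i
      simp only [cx, Pi.add_apply, Pi.smul_apply, smul_eq_mul, hσζ]
      have hsub := Complex.sub_conj (ζ i)
      field_simp [Complex.I_ne_zero]
      rw [Complex.ext_iff]
      constructor <;> simp <;> ring)
    exact ⟨_, Tu, gu, h⟩
  · obtain ⟨Tu, gu, h⟩ := main _ (2⁻¹) (2⁻¹) hre (by
      funext i
      simp only [cx, Pi.add_apply, Pi.smul_apply, smul_eq_mul, hσζ]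
      have hadd := Complex.add_conj (ζ i)
      rw [Complex.ext_iff]
      constructor <;> simp <;> ring)
    exact ⟨_, Tu, gu, h⟩

end Part2

end
end HilbertAux

/-- If `τ_Ω(γ) > 0`, then `Ω ∩ P(E_γ̃) = ∅`; consequently the ω-limit set of `γ` on `Ω`
(the set of projective accumulation points of forward orbits) is contained in
`∂Ω ∩ P(E_γ̃)`. -/
theorem omega_limit_set_in_boundary_eigenspace {d : ℕ} (C : Set (Vd d))
    (hC : IsProperConvexCone C)
    (A : Matrix (Fin (d + 1)) (Fin (d + 1)) ℝ) (hA : IsUnit A)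
    (hpres : PreservesCone C A) (hτ : 0 < translationLength C A) :
    C ∩ Eset A = ∅ ∧
      ∀ x ∈ C, ∀ n : ℕ → ℕ, StrictMono n → ∀ c : ℕ → ℝ, (∀ k, 0 < c k) →
        ∀ v : Vd d, v ≠ 0 →
          Tendsto (fun k => c k • (A ^ n k).mulVec x) atTop (nhds v) →
          v ∈ frontier C ∩ Eset A := by
  classical
  have hpart1 : ∀ y : Vd d, y ∈ C → y ∉ Eset A := fun y hy hyE =>
    absurd (HilbertAux.translationLength_nonpos hC hA hpres hy hyE) (not_le.mpr hτ)
  constructor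
  · ext y
    simp only [Set.mem_inter_iff, Set.mem_empty_iff_false, iff_false, not_and]
    exact fun h1 h2 => hpart1 y h1 h2
  intro x hx n hn c hc v hvne hlim
  have hxne : x ≠ 0 := fun h => HilbertAux.zero_not_mem hC (h ▸ hx)
  -- generalized eigenspace decomposition of x
  have htop : HilbertAux.cx x ∈
      ⨆ μ : ℂ, Module.End.maxGenEigenspace (Matrix.toLin' (A.map Complex.ofReal)) μ := by
    rw [Module.End.iSup_maxGenEigenspace_eq_top]
    trivial
  obtain ⟨fd, hfmem, hfsum⟩ := (Submodule.mem_iSup_iff_exists_finsupp _ _).mp htop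
  have hexk : ∀ μ : ℂ, ∃ k : ℕ,
      ((Matrix.toLin' (A.map Complex.ofReal) - μ • 1) ^ k) (fd μ) = 0 := fun μ =>
    (Module.End.mem_maxGenEigenspace _ _ _).mp (hfmem μ)
  choose kk hkk using hexk
  set T := fd.support with hT
  set D : ℕ := (T.sup kk) + 1 with hD
  have hD0 : 0 < D := Nat.succ_pos _
  have hnil : ∀ μ ∈ T, ((Matrix.toLin' (A.map Complex.ofReal) - μ • 1) ^ D) (fd μ) = 0 :=
    fun μ hμ =>
    HilbertAux.nil_mono _ _ (kk μ) D (le_trans (Finset.le_sup hμ) (Nat.le_succ _)) (hkk μ)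
  have hsumT : ∑ μ ∈ T, fd μ = HilbertAux.cx x := by rw [← hfsum, Finsupp.sum]
  have hfne : ∀ μ ∈ T, fd μ ≠ 0 := fun μ hμ => Finsupp.mem_support_iff.mp hμ
  have hTne0 : ∀ μ ∈ T, μ ≠ 0 := by
    intro μ hμ h0
    subst h0
    apply hfne 0 hμ
    apply HilbertAux.mulVec_pow_cancel hA D
    have h1 := hnil 0 hμ
    rw [zero_smul, sub_zero] at h1
    rw [← Matrix.toLin'_apply, HilbertAux.toLin'_pow]
    exact h1
  have hTne : T.Nonempty := by
    rcases Finset.eq_empty_or_nonempty T with h | h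
    · exfalso
      rw [h, Finset.sum_empty] at hsumT
      exact hxne (HilbertAux.cx_eq_zero.mp hsumT.symm)
    · exact h
  -- spectral facts
  have hspec_eq : spectrum ℂ (Matrix.toLin' (A.map Complex.ofReal))
      = spectrum ℂ (A.map Complex.ofReal) := HilbertAux.spectrum_toLin'_eq
  have hspec_fin : (spectrum ℂ (A.map Complex.ofReal)).Finite := Matrix.finite_spectrum _
  have hmuspec : ∀ μ ∈ T, μ ∈ spectrum ℂ (A.map Complex.ofReal) := by
    intro μ hμ
    obtain ⟨ζ, hζne, hζeq⟩ := HilbertAux.eig_of_nil (hfne μ hμ) (hnil μ hμ)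
    rw [← hspec_eq, ← Module.End.hasEigenvalue_iff_mem_spectrum]
    exact Module.End.hasEigenvalue_of_hasEigenvector
      ⟨Module.End.mem_eigenspace_iff.mpr hζeq, hζne⟩
  have hbdd : BddAbove (Complex.abs '' spectrum ℂ (A.map Complex.ofReal)) :=
    (hspec_fin.image _).bddAbove
  have hsm : specMax A = sSup (Complex.abs '' spectrum ℂ (A.map Complex.ofReal)) := rfl
  -- the maximal modulus ρ of the components of x
  set ρ : ℝ := (T.image (fun μ => Complex.abs μ)).max' (hTne.image _) with hρdef
  have hρle : ∀ μ ∈ T, Complex.abs μ ≤ ρ := fun μ hμ =>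
    Finset.le_max' _ _ (Finset.mem_image_of_mem _ hμ)
  have hρmem : ∃ μ ∈ T, Complex.abs μ = ρ := by
    have h := Finset.max'_mem _ (hTne.image (fun μ => Complex.abs μ))
    obtain ⟨μ, hμ, hm⟩ := Finset.mem_image.mp h
    exact ⟨μ, hμ, hm⟩
  have hρ0 : 0 < ρ := by
    obtain ⟨μ, hμ, he⟩ := hρmem
    rw [← he]
    exact AbsoluteValue.pos _ (hTne0 μ hμ)
  have hρ_le : ρ ≤ specMax A := by
    obtain ⟨μ, hμ, he⟩ := hρmem
    rw [← he, hsm]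
    exact le_csSup hbdd ⟨μ, hmuspec μ hμ, rfl⟩
  -- ρ equals specMax A
  have hρL : ρ = specMax A := by
    rcases eq_or_lt_of_le hρ_le with h | hlt
    · exact h
    exfalso
    have hL0 : 0 < specMax A := lt_of_le_of_lt (le_of_lt hρ0) hlt
    have hspec_ne : (spectrum ℂ (A.map Complex.ofReal)).Nonempty := by
      obtain ⟨μ₁, hμ₁⟩ := Module.End.exists_eigenvalue (Matrix.toLin' (A.map Complex.ofReal))
      refine ⟨μ₁, ?_⟩
      rw [← hspec_eq]
      exact Module.End.hasEigenvalue_iff_mem_spectrum.mp hμ₁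
    have hLmem : specMax A ∈ Complex.abs '' spectrum ℂ (A.map Complex.ofReal) := by
      rw [hsm]
      exact (hspec_ne.image _).csSup_mem (hspec_fin.image _)
    obtain ⟨μ₀, hμ₀spec, hμ₀abs⟩ := hLmem
    have hμ₀eig : Module.End.HasEigenvalue (Matrix.toLin' (A.map Complex.ofReal)) μ₀ :=
      Module.End.hasEigenvalue_iff_mem_spectrum.mpr (by rw [hspec_eq]; exact hμ₀spec)
    obtain ⟨ζ, hζvec⟩ := hμ₀eig.exists_hasEigenvector
    obtain ⟨u, Tu, gu, hune, hudec, hugood⟩ :=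
      HilbertAux.exists_real_eig_data hA hζvec.2 (Module.End.mem_eigenspace_iff.mp hζvec.1)
    have hugoodL : ∀ μ ∈ Tu, Complex.abs μ = specMax A := fun μ hμ => by
      rw [(hugood μ hμ).1, hμ₀abs]
    obtain ⟨ε, hε, hball⟩ := Metric.isOpen_iff.mp hC.1 x hx
    set δ : ℝ := ε / (2*(‖u‖+1)) with hδ
    have hδ0 : 0 < δ := by positivity
    have hzmem : ∀ σ : ℝ, |σ| ≤ 1 → x + (σ*δ) • u ∈ C := by
      intro σ hσ
      apply hball
      rw [Metric.mem_ball, dist_eq_norm, add_sub_cancel_left, norm_smul, Real.norm_eq_abs]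
      have h1 : |σ*δ| ≤ δ := by
        rw [abs_mul, abs_of_pos hδ0]
        nlinarith [abs_nonneg σ]
      calc |σ*δ| * ‖u‖ ≤ δ * ‖u‖ := mul_le_mul_of_nonneg_right h1 (norm_nonneg u)
        _ < ε := by
            rw [hδ, div_mul_eq_mul_div, div_lt_iff₀ (by positivity)]
            nlinarith [norm_nonneg u]
    have hdisj : Disjoint T Tu := by
      rw [Finset.disjoint_left]
      intro μ hμT hμTu
      have h1 := hρle μ hμT
      have h2 := hugoodL μ hμTu
      linarith
    set TT := T ∪ Tu with hTT
    set gz : ℝ → ℂ → (Fin (d+1) → ℂ) := fun σ μ =>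
      (if μ ∈ T then fd μ else 0) + ((σ*δ : ℝ) : ℂ) • (if μ ∈ Tu then gu μ else 0) with hgz
    have hzdec : ∀ σ : ℝ, HilbertAux.cx (x + (σ*δ) • u) = ∑ μ ∈ TT, gz σ μ := by
      intro σ
      rw [HilbertAux.cx_add, HilbertAux.cx_smul, ← hsumT, hudec, hgz]
      rw [Finset.sum_add_distrib]
      congr 1
      · rw [Finset.sum_ite_mem, Finset.union_inter_cancel_left]
      · rw [← Finset.smul_sum, Finset.sum_ite_mem, Finset.union_inter_cancel_right]
    have hnilz : ∀ σ : ℝ, ∀ μ ∈ TT,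
        ((Matrix.toLin' (A.map Complex.ofReal) - μ • 1) ^ D) (gz σ μ) = 0 := by
      intro σ μ hμ
      rcases Finset.mem_union.mp hμ with h | h
      · have hnotu : μ ∉ Tu := Finset.disjoint_left.mp hdisj h
        rw [hgz]
        simp only [if_pos h, if_neg hnotu, smul_zero, add_zero]
        exact hnil μ h
      · have hnott : μ ∉ T := Finset.disjoint_right.mp hdisj h
        rw [hgz]
        simp only [if_neg hnott, if_pos h, zero_add]
        rw [map_smul]
        have h1 : (((Matrix.toLin' (A.map Complex.ofReal) - μ • 1 :
            Module.End ℂ (Fin (d+1) → ℂ))) ^ 1) (gu μ) = 0 := by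
          rw [pow_one, LinearMap.sub_apply, LinearMap.smul_apply, Module.End.one_apply,
            (hugood μ h).2.2, sub_self]
        rw [HilbertAux.nil_mono _ (gu μ) 1 D hD0 h1, smul_zero]
    have hTTne0 : ∀ μ ∈ TT, μ ≠ 0 := by
      intro μ hμ
      rcases Finset.mem_union.mp hμ with h | h
      · exact hTne0 μ h
      · exact (hugood μ h).2.1
    have hTTle : ∀ μ ∈ TT, Complex.abs μ ≤ specMax A := by
      intro μ hμ
      rcases Finset.mem_union.mp hμ with h | h
      · exact le_trans (hρle μ h) hρ_le
      · exact le_of_eq (hugoodL μ h)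
    have hKz : ∀ σ : ℝ, ∀ μ ∈ TT, Complex.abs μ = specMax A → ∀ j, 0 < j →
        ((Matrix.toLin' (A.map Complex.ofReal) - μ • 1) ^ j) (gz σ μ) = 0 := by
      intro σ μ hμ habs j hj
      rcases Finset.mem_union.mp hμ with h | h
      · exfalso
        have := hρle μ h
        rw [habs] at this
        linarith
      · have hnott : μ ∉ T := Finset.disjoint_right.mp hdisj h
        rw [hgz]
        simp only [if_neg hnott, if_pos h, zero_add]
        rw [map_smul]
        have h1 : (((Matrix.toLin' (A.map Complex.ofReal) - μ • 1 :
            Module.End ℂ (Fin (d+1) → ℂ))) ^ 1) (gu μ) = 0 := by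
          rw [pow_one, LinearMap.sub_apply, LinearMap.smul_apply, Module.End.one_apply,
            (hugood μ h).2.2, sub_self]
        rw [HilbertAux.nil_mono _ (gu μ) 1 j hj h1, smul_zero]
    have hguex : ∃ μ ∈ Tu, gu μ ≠ 0 := by
      by_contra hall
      push_neg at hall
      have h0 : HilbertAux.cx u = 0 := by
        rw [hudec]
        exact Finset.sum_eq_zero hall
      exact hune (HilbertAux.cx_eq_zero.mp h0)
    have hKexz : ∀ σ : ℝ, σ ≠ 0 → ∃ μ ∈ TT, Complex.abs μ = specMax A ∧
        (((Matrix.toLin' (A.map Complex.ofReal) - μ • 1 :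
          Module.End ℂ (Fin (d+1) → ℂ))) ^ 0) (gz σ μ) ≠ 0 := by
      intro σ hσ
      obtain ⟨μ, hμ, hgune⟩ := hguex
      have hnott : μ ∉ T := Finset.disjoint_right.mp hdisj hμ
      refine ⟨μ, Finset.mem_union_right _ hμ, hugoodL μ hμ, ?_⟩
      rw [pow_zero, Module.End.one_apply, hgz]
      simp only [if_neg hnott, if_pos hμ, zero_add]
      apply smul_ne_zero ?_ hgune
      simp only [ne_eq, Complex.ofReal_eq_zero]
      exact mul_ne_zero hσ (ne_of_gt hδ0)
    -- apply the limit lemma to z± and extract the two limits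
    obtain ⟨φp, hφp, ℓp, hℓpne, _, hℓptend⟩ :=
      HilbertAux.lim_lemma TT (gz 1) D (x + (1*δ) • u) (hzdec 1) (hnilz 1) hTTne0
        (specMax A) hL0 hTTle 0 hD0 (hKz 1) (hKexz 1 one_ne_zero) id strictMono_id
    obtain ⟨φm, hφm, ℓm, hℓmne, _, hℓmtend⟩ :=
      HilbertAux.lim_lemma TT (gz (-1)) D (x + (-1*δ) • u) (hzdec (-1)) (hnilz (-1)) hTTne0
        (specMax A) hL0 hTTle 0 hD0 (hKz (-1)) (hKexz (-1) (by norm_num)) φp hφp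
    have hpcomp := hℓptend.comp hφm.tendsto_atTop
    have hdec := HilbertAux.dec_lemma T fd D x hsumT.symm hnil hTne0 (specMax A) hL0
      (fun μ hμ => lt_of_le_of_lt (hρle μ hμ) hlt)
    have hdec2 := (hdec.comp hφp.tendsto_atTop).comp hφm.tendsto_atTop
    have hsum0 : Tendsto (fun k =>
        ((specMax A ^ (id (φp (φm k))) * ((id (φp (φm k))).choose 0 : ℝ))⁻¹ •
          (A ^ (id (φp (φm k)))).mulVec (x + (1*δ) • u)) +
        ((specMax A ^ (φp (φm k)) * ((φp (φm k)).choose 0 : ℝ))⁻¹ •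
          (A ^ (φp (φm k))).mulVec (x + (-1*δ) • u))) atTop (nhds (ℓp + ℓm)) :=
      hpcomp.add hℓmtend
    have hsum0' : (fun k =>
        ((specMax A ^ (id (φp (φm k))) * ((id (φp (φm k))).choose 0 : ℝ))⁻¹ •
          (A ^ (id (φp (φm k)))).mulVec (x + (1*δ) • u)) +
        ((specMax A ^ (φp (φm k)) * ((φp (φm k)).choose 0 : ℝ))⁻¹ •
          (A ^ (φp (φm k))).mulVec (x + (-1*δ) • u)))
        = fun k => (2:ℝ) • ((specMax A ^ (φp (φm k)))⁻¹ •
            (A ^ (φp (φm k))).mulVec x) := by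
      funext k
      simp only [id_eq, Nat.choose_zero_right, Nat.cast_one, mul_one]
      rw [← smul_add, ← Matrix.mulVec_add]
      have hxx : (x + (1*δ) • u) + (x + (-1*δ) • u) = (2:ℝ) • x := by module
      rw [hxx, Matrix.mulVec_smul, smul_comm]
    rw [hsum0'] at hsum0
    have h2z : Tendsto (fun k => (2:ℝ) • ((specMax A ^ (φp (φm k)))⁻¹ •
        (A ^ (φp (φm k))).mulVec x)) atTop (nhds ((2:ℝ) • (0 : Vd d))) :=
      hdec2.const_smul (2:ℝ)
    have hlm : ℓp + ℓm = (2:ℝ) • (0 : Vd d) := tendsto_nhds_unique hsum0 h2z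
    rw [smul_zero] at hlm
    -- closure membership
    have hzpC : x + (1*δ) • u ∈ C := hzmem 1 (by norm_num)
    have hzmC : x + (-1*δ) • u ∈ C := hzmem (-1) (by norm_num)
    have hposz : ∀ m : ℕ, (0:ℝ) < (specMax A ^ m * ((m).choose 0 : ℝ))⁻¹ := by
      intro m
      simp only [Nat.choose_zero_right, Nat.cast_one, mul_one]
      exact inv_pos.mpr (pow_pos hL0 m)
    have hℓpclos : ℓp ∈ closure C := by
      apply mem_closure_of_tendsto hℓptend
      apply Eventually.of_forall
      intro k
      exact hC.2.2.2.1 _ (HilbertAux.pow_mulVec_mem hpres _ hzpC) _ (hposz _)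
    have hℓmclos : ℓm ∈ closure C := by
      apply mem_closure_of_tendsto hℓmtend
      apply Eventually.of_forall
      intro k
      exact hC.2.2.2.1 _ (HilbertAux.pow_mulVec_mem hpres _ hzmC) _ (hposz _)
    have : ℓp = 0 := by
      have hmemneg : ℓp ∈ -(closure C) := by
        rw [Set.mem_neg]
        rw [neg_eq_of_add_eq_zero_right hlm]
        exact hℓmclos
      have := hC.2.2.2.2 ⟨hℓpclos, hmemneg⟩
      simpa using this
    exact hℓpne this
  -- definition of K
  set J : Finset ℕ := (Finset.range D).filter
    (fun j => ∃ μ ∈ T, Complex.abs μ = ρ ∧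
      ((Matrix.toLin' (A.map Complex.ofReal) - μ • 1) ^ j) (fd μ) ≠ 0) with hJ
  have hJne : J.Nonempty := by
    obtain ⟨μ, hμ, he⟩ := hρmem
    refine ⟨0, Finset.mem_filter.mpr ⟨Finset.mem_range.mpr hD0, ⟨μ, hμ, he, ?_⟩⟩⟩
    rw [pow_zero, Module.End.one_apply]
    exact hfne μ hμ
  set K := J.max' hJne with hK
  have hKD : K < D := Finset.mem_range.mp (Finset.mem_filter.mp (J.max'_mem hJne)).1
  have hKex : ∃ μ ∈ T, Complex.abs μ = ρ ∧
      ((Matrix.toLin' (A.map Complex.ofReal) - μ • 1) ^ K) (fd μ) ≠ 0 :=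
    (Finset.mem_filter.mp (J.max'_mem hJne)).2
  have hKmax : ∀ μ ∈ T, Complex.abs μ = ρ → ∀ j, K < j →
      ((Matrix.toLin' (A.map Complex.ofReal) - μ • 1) ^ j) (fd μ) = 0 := by
    intro μ hμ hρμ j hKj
    by_cases hjD : j < D
    · by_contra hne
      have hmem : j ∈ J := Finset.mem_filter.mpr ⟨Finset.mem_range.mpr hjD, ⟨μ, hμ, hρμ, hne⟩⟩
      exact absurd (Finset.le_max' J j hmem) (not_le.mpr hKj)
    · push_neg at hjD
      exact HilbertAux.nil_mono _ _ D j hjD (hnil μ hμ)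
  -- apply the limit lemma along the given sequence
  obtain ⟨φ, hφ, ℓ, hℓne, hℓmem, htend⟩ :=
    HilbertAux.lim_lemma T fd D x hsumT.symm hnil hTne0 ρ hρ0 hρle K hKD hKmax hKex n hn
  -- the scalar comparison argument
  have hu1 : Tendsto (fun k => c (φ k) • (A ^ (n (φ k))).mulVec x) atTop (nhds v) :=
    hlim.comp hφ.tendsto_atTop
  have hℓn : 0 < ‖ℓ‖ := norm_pos_iff.mpr hℓne
  have hα : Tendsto (fun k => ‖c (φ k) • (A ^ (n (φ k))).mulVec x‖ /
      ‖(ρ ^ (n (φ k)) * ((n (φ k)).choose K : ℝ))⁻¹ • (A ^ (n (φ k))).mulVec x‖) atTop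
      (nhds (‖v‖/‖ℓ‖)) :=
    (hu1.norm).div (htend.norm) (ne_of_gt hℓn)
  have hmmat : Tendsto (fun k => n (φ k)) atTop atTop := (hn.comp hφ).tendsto_atTop
  have hev : ∀ᶠ k in atTop, c (φ k) • (A ^ (n (φ k))).mulVec x
      = (‖c (φ k) • (A ^ (n (φ k))).mulVec x‖ /
        ‖(ρ ^ (n (φ k)) * ((n (φ k)).choose K : ℝ))⁻¹ • (A ^ (n (φ k))).mulVec x‖) •
        ((ρ ^ (n (φ k)) * ((n (φ k)).choose K : ℝ))⁻¹ • (A ^ (n (φ k))).mulVec x) := by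
    have hev2 : ∀ᶠ k in atTop,
        (ρ ^ (n (φ k)) * ((n (φ k)).choose K : ℝ))⁻¹ • (A ^ (n (φ k))).mulVec x ≠ 0 :=
      htend.eventually_ne hℓne
    filter_upwards [hev2, hmmat.eventually_ge_atTop K] with k hk2 hkK
    have hs0 : 0 < ρ ^ (n (φ k)) * ((n (φ k)).choose K : ℝ) :=
      mul_pos (pow_pos hρ0 _) (by exact_mod_cast Nat.choose_pos hkK)
    have hre : c (φ k) • (A ^ (n (φ k))).mulVec x
        = (c (φ k) * (ρ ^ (n (φ k)) * ((n (φ k)).choose K : ℝ))) •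
          ((ρ ^ (n (φ k)) * ((n (φ k)).choose K : ℝ))⁻¹ • (A ^ (n (φ k))).mulVec x) := by
      rw [smul_smul, mul_assoc, mul_inv_cancel₀ (ne_of_gt hs0), mul_one]
    have hnorm : ‖c (φ k) • (A ^ (n (φ k))).mulVec x‖ /
        ‖(ρ ^ (n (φ k)) * ((n (φ k)).choose K : ℝ))⁻¹ • (A ^ (n (φ k))).mulVec x‖
        = c (φ k) * (ρ ^ (n (φ k)) * ((n (φ k)).choose K : ℝ)) := by
      rw [hre, norm_smul, Real.norm_eq_abs, abs_of_pos (mul_pos (hc (φ k)) hs0),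
        mul_div_assoc, div_self (norm_ne_zero_iff.mpr hk2), mul_one]
    rw [hnorm]
    exact hre
  have hvαℓ : v = (‖v‖/‖ℓ‖) • ℓ :=
    tendsto_nhds_unique hu1
      (Tendsto.congr' (hev.mono fun _ hk => hk.symm) (hα.smul htend))
  have hvE : v ∈ Eset A := by
    show HilbertAux.cx v ∈ maxModEigenSubmodule A
    rw [hvαℓ, HilbertAux.cx_smul]
    apply Submodule.smul_mem
    rw [hρL] at hℓmem
    exact hℓmem
  have hvclos : v ∈ closure C := by
    apply mem_closure_of_tendsto hlim
    apply Eventually.of_forall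
    intro k
    exact hC.2.2.2.1 _ (HilbertAux.pow_mulVec_mem hpres _ hx) _ (hc k)
  have hvnot : v ∉ C := fun hvC => hpart1 v hvC hvE
  constructor
  · rw [hC.1.frontier_eq]
    exact ⟨hvclos, hvnot⟩
  · exact hvE
end
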